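/- arXiv:2205.06038 — 5 statements merged into one kernel-verified Lean document; each statement's English description precedes it below -/
import Mathlib

section
/- For pairs (λ, μ) of strict partitions with ℓ(λ) = i + j and ℓ(μ) = j (where i, j ≥ 0) satisfying μ_1 ≤ ℓ(λ), the generating function ∑ q^{|λ|+|μ|} equals (q^{(i+j)(i+j+1)/2}/(q;q)_i) · (q^{j(j+1)/2}/(q;q)_j) · [1/(q;q)_{i+j}]·(q;q)_{i+j}, i.e., equals q^{(i+j)(i+j+1)/2 + j(j+1)/2} / ((q;q)_i (q;q)_j). -/
open Finset PowerSeries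

/-- A strict partition: a strictly decreasing finite list of positive integers. -/
structure StrictPartition where
  parts : List ℕ
  pos : ∀ p ∈ parts, 0 < p
  sorted : parts.Pairwise (· > ·)

namespace StrictPartition

/-- The size `|λ|`. -/
def size (μ : StrictPartition) : ℕ := μ.parts.sum

/-- The number of parts `ℓ(λ)`. -/
def len (μ : StrictPartition) : ℕ := μ.parts.length

/-- The largest part `λ₁` (`0` if `λ` is empty). -/
def first (μ : StrictPartition) : ℕ := μ.parts.headI

end StrictPartition

/-- `(q;q)_n = ∏_{0 ≤ j < n} (1 - q^{j+1})`. -/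
noncomputable def qPoch (n : ℕ) : PowerSeries ℚ :=
  ∏ j ∈ Finset.range n, (1 - (PowerSeries.X : PowerSeries ℚ) ^ (j + 1))

/-!
A strict partition `λ₁ > ⋯ > λₖ > 0` is determined by its gaps `gₜ = λₜ - λₜ₊₁ - 1`
(with `λₖ₊₁ = 0`), which form an arbitrary vector in `ℕᵏ`; in these coordinates
`|λ| = k(k+1)/2 + ∑ₜ (t+1) gₜ` and `λ₁ = k + ∑ₜ gₜ`. Hence `λ` contributes
`q^{k(k+1)/2} / (q;q)ₖ` with `k = i + j`, one geometric series per gap. For `μ` the bound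
`μ₁ ≤ i + j` becomes `∑ₜ gₜ ≤ i`, so the gap vector of `μ` encodes a partition in an `i × j`
box and contributes `q^{j(j+1)/2}` times the Gaussian binomial `(q;q)_{i+j} / ((q;q)ᵢ (q;q)ⱼ)`,
which follows from the `q`-Pascal recursion obtained by asking whether the last gap vanishes.
-/

section WeightGF

variable {α β : Type*}

/-- An infinite fibre contributes `0` (the `Nat.card` junk value). -/
noncomputable def weightGF (w : α → ℕ) : PowerSeries ℚ :=
  PowerSeries.mk fun n => (Nat.card {a // w a = n} : ℚ)

theorem weightGF_congr {wa : α → ℕ} {wb : β → ℕ} (e : α ≃ β) (h : ∀ a, wb (e a) = wa a) :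
    weightGF wa = weightGF wb := by
  ext n
  simp only [weightGF, coeff_mk]
  exact congrArg _ (Nat.card_congr (e.subtypeEquiv fun a => by rw [h]))

theorem weightGF_subtype (P : α → Prop) (w : α → ℕ) :
    weightGF (fun a : Subtype P => w a) =
      PowerSeries.mk fun n => (Nat.card {a // P a ∧ w a = n} : ℚ) := by
  ext n
  simp only [weightGF, coeff_mk]
  exact congrArg _ (Nat.card_congr (Equiv.subtypeSubtypeEquivSubtypeInter P (w · = n)))

theorem weightGF_of_subsingleton [Subsingleton α] (w : α → ℕ) (a : α) :
    weightGF w = X ^ w a := by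
  ext n
  rw [weightGF, coeff_mk, coeff_X_pow]
  split_ifs with h
  · have : Unique {b // w b = n} := ⟨⟨⟨a, h.symm⟩⟩, fun _ => Subtype.ext (Subsingleton.elim _ _)⟩
    simp
  · have : IsEmpty {b // w b = n} := ⟨fun b => h (Subsingleton.elim a b ▸ b.2).symm⟩
    simp

theorem weightGF_const_add (c : ℕ) (w : α → ℕ) :
    weightGF (fun a => c + w a) = X ^ c * weightGF w := by
  ext n
  rw [weightGF, weightGF, coeff_mk, coeff_X_pow_mul', coeff_mk]
  split_ifs with h
  · exact congrArg _ (Nat.card_congr (Equiv.subtypeEquivRight fun a => by omega))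
  · have : IsEmpty {a // c + w a = n} := ⟨fun a => h (by omega)⟩
    simp

instance finite_const_add_fibre (c : ℕ) (w : α → ℕ) [∀ n, Finite {a // w a = n}] (n : ℕ) :
    Finite {a // c + w a = n} :=
  Finite.of_injective (fun a : {a // c + w a = n} => (⟨a.1, by omega⟩ : {b // w b = n - c}))
    fun _ _ h => Subtype.ext (Subtype.mk.inj h)

theorem weightGF_sum (wa : α → ℕ) (wb : β → ℕ) [∀ n, Finite {a // wa a = n}]
    [∀ n, Finite {b // wb b = n}] : weightGF (Sum.elim wa wb) = weightGF wa + weightGF wb := by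
  ext n
  simp only [weightGF, coeff_mk, map_add]
  have e : {c // Sum.elim wa wb c = n} ≃ {a // wa a = n} ⊕ {b // wb b = n} := Equiv.subtypeSum
  rw [Nat.card_congr e, Nat.card_sum]
  push_cast
  rfl

def fibreAddEquiv (wa : α → ℕ) (wb : β → ℕ) (n : ℕ) :
    {p : α × β // wa p.1 + wb p.2 = n} ≃
      Σ x : antidiagonal n, {a // wa a = x.1.1} × {b // wb b = x.1.2} where
  toFun p := ⟨⟨(wa p.1.1, wb p.1.2), mem_antidiagonal.2 p.2⟩, ⟨p.1.1, rfl⟩, ⟨p.1.2, rfl⟩⟩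
  invFun s := ⟨(s.2.1.1, s.2.2.1), by rw [s.2.1.2, s.2.2.2]; exact mem_antidiagonal.1 s.1.2⟩
  left_inv _ := rfl
  right_inv := by
    rintro ⟨⟨⟨x, y⟩, h⟩, ⟨a, ha : wa a = x⟩, ⟨b, hb : wb b = y⟩⟩
    subst ha hb
    rfl

theorem weightGF_add (wa : α → ℕ) (wb : β → ℕ) [∀ n, Finite {a // wa a = n}]
    [∀ n, Finite {b // wb b = n}] :
    weightGF (fun p : α × β => wa p.1 + wb p.2) = weightGF wa * weightGF wb := by
  ext n
  simp only [weightGF, coeff_mk, coeff_mul]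
  rw [Nat.card_congr (fibreAddEquiv wa wb n), Nat.card_sigma,
    ← Finset.sum_coe_sort (antidiagonal n)]
  push_cast [Nat.card_prod]
  rfl

end WeightGF

theorem qPoch_zero : qPoch 0 = 1 := prod_range_zero _

theorem qPoch_succ (k : ℕ) : qPoch (k + 1) = qPoch k * (1 - X ^ (k + 1)) :=
  prod_range_succ _ _

theorem constantCoeff_qPoch_ne_zero (k : ℕ) : constantCoeff (qPoch k) ≠ 0 := by
  simp [qPoch, map_prod]

instance finite_mul_fibre (m n : ℕ) : Finite {r : ℕ // (m + 1) * r = n} :=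
  ((Set.finite_Iic n).subset fun r (hr : (m + 1) * r = n) => by
    simp only [Set.mem_Iic]; nlinarith).to_subtype

theorem weightGF_mul_left_mul_one_sub_X_pow (m : ℕ) :
    weightGF (fun r : ℕ => (m + 1) * r) * (1 - X ^ (m + 1)) = 1 := by
  have h : weightGF (fun r : ℕ => (m + 1) * r) =
      X ^ (m + 1) * weightGF (fun r : ℕ => (m + 1) * r) + 1 := calc
    _ = weightGF (Sum.elim (fun r : ℕ => (m + 1) + (m + 1) * r) fun _ : Unit => 0) :=
      weightGF_congr Equiv.natEquivNatSumPUnit fun r => by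
        cases r <;> simp [Equiv.natEquivNatSumPUnit, mul_add, add_comm]
    _ = _ := by rw [weightGF_sum, weightGF_const_add, weightGF_of_subsingleton _ (), pow_zero]
  linear_combination h

theorem finite_of_forall_apply_le {k : ℕ} {P : (Fin k → ℕ) → Prop} (n : ℕ)
    (h : ∀ f, P f → ∀ t, f t ≤ n) : Finite {f // P f} :=
  ((Set.finite_Iic fun _ => n).subset fun f hf => h f hf).to_subtype

def gapWeight {k : ℕ} (e : Fin k → ℕ) : ℕ := ∑ t, (t.1 + 1) * e t

theorem le_gapWeight {k : ℕ} (e : Fin k → ℕ) (t : Fin k) : e t ≤ gapWeight e :=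
  (Nat.le_mul_of_pos_left _ t.1.succ_pos).trans
    (single_le_sum (f := fun t => (t.1 + 1) * e t) (fun _ _ => Nat.zero_le _) (mem_univ t))

instance finite_gapWeight_fibre (k n : ℕ) : Finite {e : Fin k → ℕ // gapWeight e = n} :=
  finite_of_forall_apply_le n fun e he t => he ▸ le_gapWeight e t

theorem gapWeight_snoc {k : ℕ} (e : Fin k → ℕ) (r : ℕ) :
    gapWeight (Fin.snoc e r : Fin (k + 1) → ℕ) = gapWeight e + (k + 1) * r := by
  simp [gapWeight, Fin.sum_univ_castSucc]

theorem gapWeight_cons {k : ℕ} (a : ℕ) (e : Fin k → ℕ) :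
    gapWeight (Fin.cons a e : Fin (k + 1) → ℕ) = a + ∑ t, e t + gapWeight e := by
  simp [gapWeight, Fin.sum_univ_succ, add_mul, sum_add_distrib, add_assoc, add_comm]

theorem weightGF_gapWeight_mul_qPoch (k : ℕ) :
    weightGF (gapWeight : (Fin k → ℕ) → ℕ) * qPoch k = 1 := by
  induction k with
  | zero => rw [weightGF_of_subsingleton _ Fin.elim0, qPoch_zero]; simp [gapWeight]
  | succ k ih =>
    have h : weightGF (gapWeight : (Fin (k + 1) → ℕ) → ℕ) =
        weightGF (fun r : ℕ => (k + 1) * r) * weightGF (gapWeight : (Fin k → ℕ) → ℕ) := by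
      rw [← weightGF_add]
      refine (weightGF_congr (Fin.snocEquiv fun _ => ℕ) fun p => ?_).symm
      show gapWeight (Fin.snoc p.2 p.1 : Fin (k + 1) → ℕ) = _
      rw [gapWeight_snoc, add_comm]
    rw [h, qPoch_succ]
    linear_combination (weightGF fun r : ℕ => (k + 1) * r) * (1 - X ^ (k + 1)) * ih +
      weightGF_mul_left_mul_one_sub_X_pow k

theorem weightGF_gapWeight (k : ℕ) : weightGF (gapWeight : (Fin k → ℕ) → ℕ) = (qPoch k)⁻¹ :=
  (eq_inv_iff_mul_eq_one (constantCoeff_qPoch_ne_zero k)).2 (weightGF_gapWeight_mul_qPoch k)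

instance finite_sum_le (j i : ℕ) : Finite {f : Fin j → ℕ // ∑ t, f t ≤ i} :=
  finite_of_forall_apply_le i fun _ hf t =>
    (single_le_sum (fun _ _ => Nat.zero_le _) (mem_univ t)).trans hf

/-- Partitions into at most `i` parts, each at most `j` (`f t` is the multiplicity of the part
`t + 1`); this is the Gaussian binomial `[i + j, j]_q`. -/
noncomputable def gaussBinom (i j : ℕ) : PowerSeries ℚ :=
  weightGF fun f : {f : Fin j → ℕ // ∑ t, f t ≤ i} => gapWeight f.1

theorem gaussBinom_zero_left (j : ℕ) : gaussBinom 0 j = 1 := by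
  have : Subsingleton {f : Fin j → ℕ // ∑ t, f t ≤ 0} := ⟨fun f g => Subtype.ext <| by
    have hf := sum_eq_zero_iff.1 (Nat.le_zero.1 f.2)
    have hg := sum_eq_zero_iff.1 (Nat.le_zero.1 g.2)
    exact funext fun t => (hf t (mem_univ t)).trans (hg t (mem_univ t)).symm⟩
  rw [gaussBinom, weightGF_of_subsingleton _ ⟨0, by simp⟩]
  simp [gapWeight]

theorem gaussBinom_zero_right (i : ℕ) : gaussBinom i 0 = 1 := by
  rw [gaussBinom, weightGF_of_subsingleton _ ⟨0, by simp⟩]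
  simp [gapWeight]

def snocSumLeEquiv (i j : ℕ) :
    {p : ℕ × (Fin j → ℕ) // p.1 + ∑ t, p.2 t ≤ i} ≃ {f : Fin (j + 1) → ℕ // ∑ t, f t ≤ i} :=
  (Fin.snocEquiv fun _ => ℕ).subtypeEquiv fun p => by simp [Fin.sum_univ_castSucc, add_comm]

instance finite_add_sum_le (i j : ℕ) : Finite {p : ℕ × (Fin j → ℕ) // p.1 + ∑ t, p.2 t ≤ i} :=
  Finite.of_equiv _ (snocSumLeEquiv i j).symm

def addLeSuccEquiv {α : Type*} (s : α → ℕ) (n : ℕ) :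
    {p : ℕ × α // p.1 + s p.2 ≤ n + 1} ≃ {a // s a ≤ n + 1} ⊕ {p : ℕ × α // p.1 + s p.2 ≤ n} where
  toFun
    | ⟨(0, a), h⟩ => .inl ⟨a, by simpa using h⟩
    | ⟨(r + 1, a), h⟩ => .inr ⟨(r, a), by simp only at h ⊢; omega⟩
  invFun
    | .inl ⟨a, h⟩ => ⟨(0, a), by simpa using h⟩
    | .inr ⟨(r, a), h⟩ => ⟨(r + 1, a), by simp only at h ⊢; omega⟩
  left_inv := by rintro ⟨⟨_ | r, a⟩, h⟩ <;> rfl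
  right_inv := by rintro (⟨a, h⟩ | ⟨⟨r, a⟩, h⟩) <;> rfl

theorem gaussBinom_succ_right (i j : ℕ) :
    gaussBinom i (j + 1) = weightGF fun p : {p : ℕ × (Fin j → ℕ) // p.1 + ∑ t, p.2 t ≤ i} =>
      (j + 1) * p.1.1 + gapWeight p.1.2 := by
  refine (weightGF_congr (snocSumLeEquiv i j) fun p => ?_).symm
  show gapWeight (Fin.snoc p.1.2 p.1.1 : Fin (j + 1) → ℕ) = _
  rw [gapWeight_snoc, add_comm]

theorem gaussBinom_succ_succ (i j : ℕ) :
    gaussBinom (i + 1) (j + 1) = gaussBinom (i + 1) j + X ^ (j + 1) * gaussBinom i (j + 1) := by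
  rw [gaussBinom_succ_right, gaussBinom_succ_right, ← weightGF_const_add, gaussBinom,
    ← weightGF_sum]
  refine weightGF_congr (addLeSuccEquiv _ i) ?_
  rintro ⟨⟨_ | r, e⟩, h⟩
  · simp [addLeSuccEquiv]
  · simp only [addLeSuccEquiv, Equiv.coe_fn_mk, Sum.elim_inr]
    ring

theorem gaussBinom_mul_qPoch (i j : ℕ) :
    gaussBinom i j * (qPoch i * qPoch j) = qPoch (i + j) := by
  induction i generalizing j with
  | zero => simp [gaussBinom_zero_left, qPoch_zero]
  | succ i ihi =>
    induction j with
    | zero => simp [gaussBinom_zero_right, qPoch_zero]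
    | succ j ihj =>
      have hi : gaussBinom i (j + 1) * (qPoch i * qPoch (j + 1)) = qPoch (i + 1 + j) := by
        rw [ihi, Nat.add_right_comm, Nat.add_assoc]
      rw [qPoch_succ i] at ihj ⊢
      rw [qPoch_succ j] at hi ⊢
      rw [gaussBinom_succ_succ, show i + 1 + (j + 1) = i + 1 + j + 1 by omega,
        qPoch_succ (i + 1 + j)]
      linear_combination (1 - X ^ (j + 1)) * ihj + X ^ (j + 1) * (1 - X ^ (i + 1)) * hi

theorem gaussBinom_eq (i j : ℕ) :
    gaussBinom i j = qPoch (i + j) * (qPoch i)⁻¹ * (qPoch j)⁻¹ := by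
  rw [eq_mul_inv_iff_mul_eq (constantCoeff_qPoch_ne_zero j),
    eq_mul_inv_iff_mul_eq (constantCoeff_qPoch_ne_zero i), mul_assoc, mul_comm (qPoch j)]
  exact gaussBinom_mul_qPoch i j

theorem triangle_succ (k : ℕ) : (k + 1) * (k + 1 + 1) / 2 = k * (k + 1) / 2 + (k + 1) := by
  rw [show (k + 1) * (k + 1 + 1) = k * (k + 1) + (k + 1) * 2 by ring,
    Nat.add_mul_div_right _ _ two_pos]

theorem List.le_headI_of_pairwise_gt {l : List ℕ} (h : l.Pairwise (· > ·)) {x : ℕ} (hx : x ∈ l) :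
    x ≤ l.headI := by
  cases l with
  | nil => simp at hx
  | cons a t =>
    rcases List.mem_cons.1 hx with rfl | hx
    · exact le_rfl
    · exact (List.rel_of_pairwise_cons h hx).le

namespace StrictPartition

theorem ext {p q : StrictPartition} (h : p.parts = q.parts) : p = q := by
  cases p; cases q; cases h; rfl

/-- Inverse of `gaps`: the parts are `λₜ = ∑_{s ≥ t} (gₛ + 1)`. -/
def ofGaps : List ℕ → List ℕ
  | [] => []
  | g :: t => (g + 1 + (ofGaps t).headI) :: ofGaps t

/-- The gaps `λₜ - λₜ₊₁ - 1` of a decreasing list, with `λₖ₊₁ = 0` (the `headI` of `[]`). -/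
def gaps : List ℕ → List ℕ
  | [] => []
  | a :: t => (a - t.headI - 1) :: gaps t

@[simp] theorem length_ofGaps (l : List ℕ) : (ofGaps l).length = l.length := by
  induction l with
  | nil => rfl
  | cons g t ih => simp [ofGaps, ih]

@[simp] theorem length_gaps (l : List ℕ) : (gaps l).length = l.length := by
  induction l with
  | nil => rfl
  | cons g t ih => simp [gaps, ih]

theorem headI_ofGaps (l : List ℕ) : (ofGaps l).headI = l.length + l.sum := by
  induction l with
  | nil => rfl
  | cons g t ih => simp only [ofGaps, List.headI_cons, ih, List.length_cons, List.sum_cons]; omega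

theorem pairwise_ofGaps (l : List ℕ) : (ofGaps l).Pairwise (· > ·) := by
  induction l with
  | nil => exact List.Pairwise.nil
  | cons g t ih =>
    refine List.pairwise_cons.2 ⟨fun b hb => ?_, ih⟩
    have := List.le_headI_of_pairwise_gt ih hb
    omega

theorem pos_of_mem_ofGaps {l : List ℕ} {p : ℕ} (hp : p ∈ ofGaps l) : 0 < p := by
  induction l with
  | nil => simp [ofGaps] at hp
  | cons g t ih =>
    rcases List.mem_cons.1 hp with rfl | hp
    · omega
    · exact ih hp

theorem gaps_ofGaps (l : List ℕ) : gaps (ofGaps l) = l := by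
  induction l with
  | nil => rfl
  | cons g t ih => rw [ofGaps, gaps, ih]; congr 1; omega

theorem ofGaps_gaps {l : List ℕ} (hs : l.Pairwise (· > ·)) (hp : ∀ p ∈ l, 0 < p) :
    ofGaps (gaps l) = l := by
  induction l with
  | nil => rfl
  | cons a t ih =>
    rw [List.pairwise_cons] at hs
    rw [gaps, ofGaps, ih hs.2 fun p hp' => hp p (List.mem_cons_of_mem _ hp')]
    congr 1
    have ha := hp a List.mem_cons_self
    cases t with
    | nil => show a - 0 - 1 + 1 + 0 = a; omega
    | cons b t =>
      have := hs.1 b List.mem_cons_self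
      simp only [List.headI_cons]; omega

theorem sum_ofGaps_ofFn {k : ℕ} (e : Fin k → ℕ) :
    (ofGaps (List.ofFn e)).sum = k * (k + 1) / 2 + gapWeight e := by
  induction k with
  | zero => simp [ofGaps, gapWeight]
  | succ k ih =>
    rw [← Fin.cons_self_tail e, List.ofFn_cons, ofGaps, List.sum_cons, ih, headI_ofGaps,
      List.length_ofFn, List.sum_ofFn, gapWeight_cons, triangle_succ]
    ring

def gapsVectorEquiv (k : ℕ) : {p : StrictPartition // p.len = k} ≃ List.Vector ℕ k where
  toFun p := ⟨gaps p.1.parts, by rw [length_gaps]; exact p.2⟩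
  invFun v := ⟨⟨ofGaps v.1, fun _ => pos_of_mem_ofGaps, pairwise_ofGaps _⟩, by
    simp [len, v.2]⟩
  left_inv p := Subtype.ext (ext (ofGaps_gaps p.1.sorted p.1.pos))
  right_inv v := Subtype.ext (gaps_ofGaps v.1)

def gapEquiv (k : ℕ) : {p : StrictPartition // p.len = k} ≃ (Fin k → ℕ) :=
  (gapsVectorEquiv k).trans (Equiv.vectorEquivFin ℕ k)

theorem parts_gapEquiv_symm {k : ℕ} (e : Fin k → ℕ) :
    ((gapEquiv k).symm e).1.parts = ofGaps (List.ofFn e) := by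
  show ofGaps (List.Vector.ofFn e).toList = _
  rw [List.Vector.toList_ofFn]

theorem size_gapEquiv_symm {k : ℕ} (e : Fin k → ℕ) :
    ((gapEquiv k).symm e).1.size = k * (k + 1) / 2 + gapWeight e := by
  rw [size, parts_gapEquiv_symm, sum_ofGaps_ofFn]

theorem first_gapEquiv_symm {k : ℕ} (e : Fin k → ℕ) :
    ((gapEquiv k).symm e).1.first = k + ∑ t, e t := by
  rw [first, parts_gapEquiv_symm, headI_ofGaps, List.length_ofFn, List.sum_ofFn]

def boundedGapEquiv (i j : ℕ) :
    {f : Fin j → ℕ // ∑ t, f t ≤ i} ≃ {μ : StrictPartition // μ.len = j ∧ μ.first ≤ i + j} :=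
  ((gapEquiv j).symm.subtypeEquiv (q := fun μ => μ.1.first ≤ i + j) fun f => by
    rw [first_gapEquiv_symm]; omega).trans
    (Equiv.subtypeSubtypeEquivSubtypeInter (fun μ : StrictPartition => μ.len = j) fun μ =>
      μ.first ≤ i + j)

def gapPairEquiv (i j : ℕ) : (Fin (i + j) → ℕ) × {f : Fin j → ℕ // ∑ t, f t ≤ i} ≃
    {p : StrictPartition × StrictPartition //
      p.1.len = i + j ∧ p.2.len = j ∧ p.2.first ≤ p.1.len} :=
  ((gapEquiv (i + j)).symm.prodCongr (boundedGapEquiv i j)).trans <|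
    Equiv.subtypeProdEquivProd.symm.trans <| Equiv.subtypeEquivRight fun p => by
      constructor <;> rintro ⟨h₁, h₂, h₃⟩ <;> exact ⟨h₁, h₂, by omega⟩

theorem size_gapPairEquiv (i j : ℕ) (y : (Fin (i + j) → ℕ) × {f : Fin j → ℕ // ∑ t, f t ≤ i}) :
    (gapPairEquiv i j y).1.1.size + (gapPairEquiv i j y).1.2.size =
      (i + j) * (i + j + 1) / 2 + j * (j + 1) / 2 + (gapWeight y.1 + gapWeight y.2.1) := by
  show ((gapEquiv (i + j)).symm y.1).1.size + ((gapEquiv j).symm y.2.1).1.size = _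
  rw [size_gapEquiv_symm, size_gapEquiv_symm]
  ring

end StrictPartition

/-- The generating function of pairs `(λ, μ)` of strict partitions with
`ℓ(λ) = i + j`, `ℓ(μ) = j` and `μ₁ ≤ ℓ(λ)` equals
`q^{(i+j)(i+j+1)/2 + j(j+1)/2} / ((q;q)_i (q;q)_j)`. -/
theorem pair_gf (i j : ℕ) :
    PowerSeries.mk (fun N =>
        (Nat.card {p : StrictPartition × StrictPartition //
          p.1.len = i + j ∧ p.2.len = j ∧ p.2.first ≤ p.1.len ∧
          p.1.size + p.2.size = N} : ℚ)) =
      (PowerSeries.X : PowerSeries ℚ) ^ ((i + j) * (i + j + 1) / 2 + j * (j + 1) / 2) *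
        (qPoch i)⁻¹ * (qPoch j)⁻¹ := by
  calc _ = weightGF fun p : {p : StrictPartition × StrictPartition //
          p.1.len = i + j ∧ p.2.len = j ∧ p.2.first ≤ p.1.len} => p.1.1.size + p.1.2.size := by
        rw [weightGF_subtype _ fun p : StrictPartition × StrictPartition => p.1.size + p.2.size]
        simp only [and_assoc]
    _ = weightGF fun y => (i + j) * (i + j + 1) / 2 + j * (j + 1) / 2 +
          (gapWeight y.1 + gapWeight y.2.1) :=
        (weightGF_congr (StrictPartition.gapPairEquiv i j)
          (StrictPartition.size_gapPairEquiv i j)).symm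
    _ = X ^ ((i + j) * (i + j + 1) / 2 + j * (j + 1) / 2) *
          ((qPoch (i + j))⁻¹ * (qPoch (i + j) * (qPoch i)⁻¹ * (qPoch j)⁻¹)) := by
        rw [weightGF_const_add,
          weightGF_add gapWeight fun f : {f : Fin j → ℕ // ∑ t, f t ≤ i} => gapWeight f.1,
          weightGF_gapWeight, ← gaussBinom_eq]
        rfl
    _ = _ := by
        rw [mul_assoc (qPoch (i + j)), ← mul_assoc (qPoch (i + j))⁻¹,
          PowerSeries.inv_mul_cancel _ (constantCoeff_qPoch_ne_zero _), one_mul, mul_assoc]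
end

section
/- Fix j_1, …, j_k ≥ 0 and let A be the set of k-tuples of strict partitions with ℓ(λ^{(i)}) = j_i + ⋯ + j_k for all i. Let V = {𝛌 ∈ A : ℓ(λ^{(i)}) ≥ (λ^{(i+1)})_1 for 1 ≤ i < k} and W = {𝛌 ∈ A : for 1 ≤ i < k, the last ℓ(λ^{(i+1)}) parts of λ^{(i)} form the staircase Δ_{ℓ(λ^{(i+1)})}}. Then there is a size-preserving bijection from V to W (equivalently, ∑_{𝛌∈V} q^{|𝛌|} = ∑_{𝛌∈W} q^{|𝛌|}). -/
open Finset PowerSeries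

/-- The staircase `Δ_m = (m, m-1, …, 1)` as a list. -/
def staircase (m : ℕ) : List ℕ := (List.range m).reverse.map (· + 1)

/-!
Both conditions constrain each `λ^{(a)}` only through its set of parts and the fixed lengths
`ℓ_a = j_a + ⋯ + j_k`: `V` asks `λ^{(a+1)} ⊆ [1, ℓ_a]`, `W` asks `[1, ℓ_{a+1}] ⊆ λ^{(a)}`. So `V`
can be turned into `W` one adjacent pair at a time, by a size-preserving bijection between pairs
`(T, U)` of part sets with `U ⊆ [1, |T|]` and pairs `(T', U')` with `[1, |U'|] ⊆ T'`, applied at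
positions `(0, 1), (1, 2), …, (k - 2, k - 1)`: after `t` steps the coordinates before `t` satisfy
the `W`-condition and those after `t` the `V`-condition.

Given `(T, U)`, let `S` be the elements of `T` in the positions listed by `U` and `R = T \ S`; put
`U' = S` and `T' = [1, |S|] ∪ {r + #{s ∈ S | r < s} | r ∈ R}`. Both `ΣT + ΣU` and `ΣT' + ΣU'`
equal `ΣS + ΣR + (1 + ⋯ + |S|) + #{(r, s) ∈ R × S | r < s}`. For `0 ∉ S` the map
`r ↦ r + #{s ∈ S | r < s} = |S| + #{x < r | x ∉ S}` sends the positive non-members of `S`, in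
order, onto `|S| + 1, |S| + 2, …`, so it is inverted with `Nat.nth`.
-/

section UpdatePair

variable {ι β : Type*} [DecidableEq ι] {i j : ι}

def updatePair (F : ι → β) (i j : ι) (p : β × β) : ι → β :=
  Function.update (Function.update F i p.1) j p.2

lemma updatePair_apply_left (hij : i ≠ j) (F : ι → β) (p : β × β) :
    updatePair F i j p i = p.1 := by
  simp [updatePair, hij]

lemma updatePair_apply_right (F : ι → β) (p : β × β) : updatePair F i j p j = p.2 := by
  simp [updatePair]

lemma updatePair_apply_of_ne {a : ι} (hi : a ≠ i) (hj : a ≠ j) (F : ι → β) (p : β × β) :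
    updatePair F i j p a = F a := by
  simp [updatePair, hi, hj]

lemma updatePair_updatePair (F : ι → β) (p q : β × β) :
    updatePair (updatePair F i j p) i j q = updatePair F i j q := by
  ext a
  simp only [updatePair, Function.update_apply]
  split_ifs <;> rfl

lemma updatePair_self (F : ι → β) : updatePair F i j (F i, F j) = F := by
  simp [updatePair]

lemma sum_updatePair [Fintype ι] {M : Type*} [AddCommMonoid M] (hij : i ≠ j) (w : β → M)
    (F : ι → β) (p : β × β) (hw : w p.1 + w p.2 = w (F i) + w (F j)) :
    ∑ a, w (updatePair F i j p a) = ∑ a, w (F a) := by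
  rw [← sum_add_sum_compl {i, j}, ← sum_add_sum_compl {i, j} (fun a => w (F a)), sum_pair hij,
    sum_pair hij, updatePair_apply_left hij, updatePair_apply_right, hw]
  refine congrArg _ (sum_congr rfl fun a ha => ?_)
  simp only [mem_compl, mem_insert, mem_singleton, not_or] at ha
  rw [updatePair_apply_of_ne ha.1 ha.2]

variable {P Q : ι → β → Prop}

def updatePairMap (hij : i ≠ j) (hPQ : ∀ a, a ≠ i → a ≠ j → ∀ b, P a b → Q a b)
    (f : {p : β × β // P i p.1 ∧ P j p.2} → {p : β × β // Q i p.1 ∧ Q j p.2})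
    (F : {F : ι → β // ∀ a, P a (F a)}) : {F : ι → β // ∀ a, Q a (F a)} :=
  ⟨updatePair F.1 i j (f ⟨(F.1 i, F.1 j), F.2 i, F.2 j⟩).1, fun a => by
    by_cases hj : a = j
    · subst hj
      rw [updatePair_apply_right]
      exact (f _).2.2
    by_cases hi : a = i
    · subst hi
      rw [updatePair_apply_left hij]
      exact (f _).2.1
    rw [updatePair_apply_of_ne hi hj]
    exact hPQ a hi hj _ (F.2 a)⟩

lemma updatePairMap_updatePairMap (hij : i ≠ j)
    (hPQ : ∀ a, a ≠ i → a ≠ j → ∀ b, P a b → Q a b)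
    (hQP : ∀ a, a ≠ i → a ≠ j → ∀ b, Q a b → P a b)
    (f : {p : β × β // P i p.1 ∧ P j p.2} → {p : β × β // Q i p.1 ∧ Q j p.2})
    (g : {p : β × β // Q i p.1 ∧ Q j p.2} → {p : β × β // P i p.1 ∧ P j p.2})
    (hgf : ∀ x, g (f x) = x) (F : {F : ι → β // ∀ a, P a (F a)}) :
    updatePairMap hij hQP g (updatePairMap hij hPQ f F) = F := by
  apply Subtype.ext
  set x : {p : β × β // P i p.1 ∧ P j p.2} := ⟨(F.1 i, F.1 j), F.2 i, F.2 j⟩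
  have hx : (⟨((updatePairMap hij hPQ f F).1 i, (updatePairMap hij hPQ f F).1 j),
      (updatePairMap hij hPQ f F).2 i, (updatePairMap hij hPQ f F).2 j⟩ :
      {p : β × β // Q i p.1 ∧ Q j p.2}) = f x :=
    Subtype.ext (Prod.ext (updatePair_apply_left hij _ _) (updatePair_apply_right _ _))
  change updatePair (updatePair F.1 i j (f x).1) i j (g _).1 = F.1
  rw [hx, hgf, updatePair_updatePair, updatePair_self]

def updatePairEquiv (hij : i ≠ j) (hPQ : ∀ a, a ≠ i → a ≠ j → ∀ b, P a b ↔ Q a b)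
    (e : {p : β × β // P i p.1 ∧ P j p.2} ≃ {p : β × β // Q i p.1 ∧ Q j p.2}) :
    {F : ι → β // ∀ a, P a (F a)} ≃ {F : ι → β // ∀ a, Q a (F a)} where
  toFun := updatePairMap hij (fun a hi hj b => (hPQ a hi hj b).1) e
  invFun := updatePairMap hij (fun a hi hj b => (hPQ a hi hj b).2) e.symm
  left_inv := updatePairMap_updatePairMap hij _ _ e e.symm e.symm_apply_apply
  right_inv := updatePairMap_updatePairMap hij _ _ e.symm e e.apply_symm_apply

lemma sum_updatePairEquiv [Fintype ι] {M : Type*} [AddCommMonoid M] (hij : i ≠ j)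
    (hPQ : ∀ a, a ≠ i → a ≠ j → ∀ b, P a b ↔ Q a b)
    (e : {p : β × β // P i p.1 ∧ P j p.2} ≃ {p : β × β // Q i p.1 ∧ Q j p.2}) (w : β → M)
    (hw : ∀ x, w (e x).1.1 + w (e x).1.2 = w x.1.1 + w x.1.2)
    (F : {F : ι → β // ∀ a, P a (F a)}) :
    ∑ a, w ((updatePairEquiv hij hPQ e F).1 a) = ∑ a, w (F.1 a) :=
  sum_updatePair hij w _ _ (hw _)

end UpdatePair

lemma Nat.card_subtype_and_eq_of_equiv {α : Type*} {A B : α → Prop} (w : α → ℕ)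
    (e : {x // A x} ≃ {x // B x}) (he : ∀ x, w (e x) = w x) (N : ℕ) :
    Nat.card {x // A x ∧ w x = N} = Nat.card {x // B x ∧ w x = N} := by
  rw [← Nat.card_congr (Equiv.subtypeSubtypeEquivSubtypeInter A (w · = N)),
    ← Nat.card_congr (Equiv.subtypeSubtypeEquivSubtypeInter B (w · = N))]
  exact Nat.card_congr (e.subtypeEquiv fun x => by rw [he])

namespace StrictPartition

lemma nodup_parts (μ : StrictPartition) : μ.parts.Nodup := μ.sorted.imp ne_of_gt

lemma zero_notMem_toFinset (μ : StrictPartition) : 0 ∉ μ.parts.toFinset :=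
  fun h => (μ.pos 0 (List.mem_toFinset.1 h)).false

lemma card_toFinset (μ : StrictPartition) : #μ.parts.toFinset = μ.len :=
  List.toFinset_card_of_nodup μ.nodup_parts

lemma sum_toFinset (μ : StrictPartition) : ∑ x ∈ μ.parts.toFinset, x = μ.size := by
  rw [List.sum_toFinset _ μ.nodup_parts, List.map_id']
  rfl

def equivFinset : StrictPartition ≃ {S : Finset ℕ // 0 ∉ S} where
  toFun μ := ⟨μ.parts.toFinset, μ.zero_notMem_toFinset⟩
  invFun S := ⟨S.1.sort (· ≥ ·),
    fun x hx => Nat.pos_of_ne_zero (ne_of_mem_of_not_mem (mem_sort _ |>.1 hx) S.2),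
    (sortedGT_sort S.1).pairwise⟩
  left_inv μ := by
    obtain ⟨l, _, hsorted⟩ := μ
    simp only [StrictPartition.mk.injEq]
    exact (List.toFinset_sort _ (hsorted.imp ne_of_gt)).2 (hsorted.imp le_of_lt)
  right_inv S := Subtype.ext (sort_toFinset _ _)

lemma first_le_iff (μ : StrictPartition) (c : ℕ) : μ.first ≤ c ↔ μ.parts.toFinset ⊆ Icc 1 c := by
  obtain ⟨_ | ⟨a, l⟩, hpos, hsorted⟩ := μ
  · simp [first]
  have hmax : ∀ x ∈ a :: l, x ≤ a := fun x hx =>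
    (List.mem_cons.1 hx).elim le_of_eq fun hx => (List.rel_of_pairwise_cons hsorted hx).le
  refine ⟨fun h x hx => ?_, fun h => (mem_Icc.1 (h (List.mem_toFinset.2 List.mem_cons_self))).2⟩
  rw [List.mem_toFinset] at hx
  exact mem_Icc.2 ⟨hpos x hx, (hmax x hx).trans h⟩

end StrictPartition

lemma mem_staircase {m x : ℕ} : x ∈ staircase m ↔ x ∈ Icc 1 m := by
  simp only [staircase, List.mem_map, List.mem_reverse, List.mem_range, mem_Icc]
  exact ⟨by rintro ⟨y, hy, rfl⟩; omega, fun h => ⟨x - 1, by omega, by omega⟩⟩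

lemma pairwise_staircase (m : ℕ) : (staircase m).Pairwise (· > ·) := by
  simp only [staircase, List.pairwise_map, List.pairwise_reverse]
  exact List.pairwise_lt_range.imp fun h => Nat.add_lt_add_right h 1

lemma length_staircase (m : ℕ) : (staircase m).length = m := by
  simp [staircase]

lemma eq_staircase_of_mem_iff {l : List ℕ} {m : ℕ} (hl : l.Pairwise (· > ·))
    (h : ∀ x, x ∈ l ↔ x ∈ Icc 1 m) : l = staircase m := by
  have hsort : ∀ {l : List ℕ}, l.Pairwise (· > ·) → l.toFinset.sort (· ≥ ·) = l := fun hl =>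
    (List.toFinset_sort _ (hl.imp ne_of_gt)).2 (hl.imp le_of_lt)
  have hset : l.toFinset = (staircase m).toFinset := by
    ext x
    rw [List.mem_toFinset, List.mem_toFinset, h, mem_staircase]
  rw [← hsort hl, hset, hsort (pairwise_staircase m)]

lemma drop_eq_staircase {l : List ℕ} {m : ℕ} (hl : l.Pairwise (· > ·)) (hpos : ∀ x ∈ l, 0 < x)
    (hm : ∀ x ∈ Icc 1 m, x ∈ l) : l.drop (l.length - m) = staircase m := by
  induction l with
  | nil =>
    cases m with
    | zero => rfl
    | succ m => exact absurd (hm 1 (by simp)) List.not_mem_nil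
  | cons a l ih =>
    rw [List.pairwise_cons] at hl
    by_cases ha : m < a
    · have hm' : ∀ x ∈ Icc 1 m, x ∈ l := fun x hx =>
        (List.mem_cons.1 (hm x hx)).resolve_left fun hxa => by
          rw [mem_Icc] at hx
          omega
      have hlen : m ≤ l.length := by
        have := card_le_card (s := Icc 1 m) (t := l.toFinset) fun x hx => by
          simpa using hm' x hx
        simpa using this.trans l.toFinset_card_le
      rw [List.length_cons, show l.length + 1 - m = l.length - m + 1 by omega,
        List.drop_succ_cons]
      exact ih hl.2 (fun x hx => hpos x (.tail _ hx)) hm'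
    · have hla : ∀ x ∈ a :: l, x ≤ a := fun x hx =>
        (List.mem_cons.1 hx).elim le_of_eq fun hx => (hl.1 x hx).le
      have heq : a :: l = staircase m := eq_staircase_of_mem_iff (List.pairwise_cons.2 hl)
        fun x => ⟨fun hx => mem_Icc.2 ⟨hpos x hx, by have := hla x hx; omega⟩, hm x⟩
      rw [heq, length_staircase, Nat.sub_self, List.drop_zero]

lemma StrictPartition.drop_eq_staircase_iff (μ : StrictPartition) (m : ℕ) :
    μ.parts.drop (μ.len - m) = staircase m ↔ Icc 1 m ⊆ μ.parts.toFinset := by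
  refine ⟨fun h x hx => ?_, fun h => drop_eq_staircase μ.sorted μ.pos fun x hx => ?_⟩
  · rw [← mem_staircase, ← h] at hx
    exact List.mem_toFinset.2 (List.mem_of_mem_drop hx)
  · exact List.mem_toFinset.1 (h hx)

lemma StrictPartition.card_tuples_eq {k : ℕ} (C : (Fin k → StrictPartition) → Prop)
    (D : (Fin k → Finset ℕ) → Prop) (hCD : ∀ L, C L ↔ D fun a => (L a).parts.toFinset)
    (hD : ∀ F, D F → ∀ a, 0 ∉ F a) : Nat.card {L // C L} = Nat.card {F // D F} := by
  let e : (Fin k → StrictPartition) ≃ {F : Fin k → Finset ℕ // ∀ a, 0 ∉ F a} :=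
    (Equiv.piCongrRight fun _ => equivFinset).trans Equiv.subtypePiEquivPi.symm
  exact Nat.card_congr ((e.subtypeEquiv (q := fun F => D F.1) hCD).trans
    ((Equiv.subtypeSubtypeEquivSubtypeInter _ D).trans
      (Equiv.subtypeEquivRight fun F => and_iff_right_of_imp (hD F))))

namespace StaircaseBijection

def rank (T : Finset ℕ) (t : ℕ) : ℕ := #{x ∈ T | x ≤ t}

def atRanks (T U : Finset ℕ) : Finset ℕ := {t ∈ T | rank T t ∈ U}

section Rank

variable {T U S R : Finset ℕ} {t : ℕ}

lemma rank_strictMonoOn : StrictMonoOn (rank T) T := fun t _ t' ht' h =>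
  card_lt_card <| (ssubset_iff_of_subset (monotone_filter_right _ fun _ _ hx => hx.trans h.le)).2
    ⟨t', mem_filter.2 ⟨ht', le_rfl⟩, by simp [h]⟩

lemma rank_mem_Icc (ht : t ∈ T) : rank T t ∈ Icc 1 #T :=
  mem_Icc.2 ⟨card_pos.2 ⟨t, by simp [ht]⟩, card_filter_le _ _⟩

lemma image_rank (T : Finset ℕ) : T.image (rank T) = Icc 1 #T :=
  eq_of_subset_of_card_le (image_subset_iff.2 fun _ => rank_mem_Icc) <| by
    rw [card_image_of_injOn rank_strictMonoOn.injOn, Nat.card_Icc, Nat.add_sub_cancel]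

lemma image_rank_atRanks (hU : U ⊆ Icc 1 #T) : (atRanks T U).image (rank T) = U := by
  have := filter_image (s := T) (f := rank T) (p := (· ∈ U))
  rwa [image_rank, filter_mem_eq_inter, inter_eq_right.2 hU, eq_comm] at this

lemma atRanks_image_rank (hS : S ⊆ T) : atRanks T (S.image (rank T)) = S := by
  ext t
  simp only [atRanks, mem_filter, mem_image]
  refine ⟨fun ⟨ht, s, hs, hst⟩ => rank_strictMonoOn.injOn (hS hs) ht hst ▸ hs,
    fun hs => ⟨hS hs, t, hs, rfl⟩⟩

lemma sum_rank_self (T : Finset ℕ) : ∑ t ∈ T, rank T t = ∑ i ∈ Icc 1 #T, i := by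
  rw [← image_rank, sum_image rank_strictMonoOn.injOn]

lemma rank_union (hSR : Disjoint S R) (ht : t ∉ R) :
    rank (S ∪ R) t = rank S t + #{r ∈ R | r < t} := by
  rw [rank, filter_union, card_union_of_disjoint (disjoint_filter_filter hSR), rank]
  congr 2
  exact filter_congr fun r hr =>
    ⟨fun h => lt_of_le_of_ne h (ne_of_mem_of_not_mem hr ht), le_of_lt⟩

end Rank

def shift (S : Finset ℕ) (v : ℕ) : ℕ := v + #{s ∈ S | v < s}

noncomputable def unshift (S : Finset ℕ) (m : ℕ) : ℕ := Nat.nth (· ∉ S) (m - #S)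

section Shift

variable {S R : Finset ℕ} {v m : ℕ}

lemma shift_eq_card_add_count (hv : v ∉ S) : shift S v = #S + Nat.count (· ∉ S) v := by
  have hsplit : #{s ∈ S | s < v} + #{s ∈ S | v < s} = #S := by
    rw [← card_union_of_disjoint (disjoint_filter.2 fun _ _ h => h.not_gt), ← filter_or]
    exact congrArg card (filter_true_of_mem fun s hs => (ne_of_mem_of_not_mem hs hv).lt_or_gt)
  have hcount : Nat.count (· ∈ S) v + Nat.count (· ∉ S) v = v := by
    simpa [Nat.count_eq_card_filter_range] using
      card_filter_add_card_filter_not (s := range v) (p := (· ∈ S))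
  have hbelow : Nat.count (· ∈ S) v = #{s ∈ S | s < v} := by
    rw [Nat.count_eq_card_filter_range]
    congr 1
    ext; simp [and_comm]
  rw [shift]
  omega

lemma infinite_setOf_notMem (S : Finset ℕ) : {x | x ∉ S}.Infinite :=
  S.finite_toSet.infinite_compl

lemma unshift_notMem (S : Finset ℕ) (m : ℕ) : unshift S m ∉ S :=
  Nat.nth_mem_of_infinite (infinite_setOf_notMem S) _

lemma unshift_shift (hv : v ∉ S) : unshift S (shift S v) = v := by
  rw [unshift, shift_eq_card_add_count hv, Nat.add_sub_cancel_left, Nat.nth_count hv]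

lemma shift_unshift (hm : #S ≤ m) : shift S (unshift S m) = m := by
  rw [shift_eq_card_add_count (unshift_notMem S m), unshift,
    Nat.count_nth_of_infinite (infinite_setOf_notMem S)]
  omega

lemma card_lt_shift (hS : 0 ∉ S) (hv : v ∉ S) (hv0 : v ≠ 0) : #S < shift S v := by
  rw [shift_eq_card_add_count hv]
  have := Nat.count_strict_mono (p := (· ∉ S)) hS (Nat.pos_of_ne_zero hv0)
  simp only [Nat.count_zero] at this
  omega

lemma unshift_ne_zero (hS : 0 ∉ S) (hm : #S < m) : unshift S m ≠ 0 := by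
  intro h
  have := shift_unshift hm.le
  rw [h, shift_eq_card_add_count hS, Nat.count_zero] at this
  omega

lemma shift_injOn : Set.InjOn (shift S) {v | v ∉ S} :=
  Set.LeftInvOn.injOn (f₁' := unshift S) fun _ hv => unshift_shift hv

lemma unshift_injOn : Set.InjOn (unshift S) {m | #S ≤ m} :=
  Set.LeftInvOn.injOn (f₁' := shift S) fun _ hm => shift_unshift hm

lemma sum_shift (S R : Finset ℕ) :
    ∑ r ∈ R, shift S r = ∑ r ∈ R, r + ∑ s ∈ S, #{r ∈ R | r < s} := by
  simp only [shift, sum_add_distrib]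
  exact congrArg _ (sum_card_bipartiteAbove_eq_sum_card_bipartiteBelow (· < ·))

end Shift

def IsVPair (c₁ c₂ : ℕ) (p : Finset ℕ × Finset ℕ) : Prop :=
  0 ∉ p.1 ∧ #p.1 = c₁ ∧ #p.2 = c₂ ∧ p.2 ⊆ Icc 1 c₁

def IsWPair (c₁ c₂ : ℕ) (p : Finset ℕ × Finset ℕ) : Prop :=
  0 ∉ p.1 ∧ #p.1 = c₁ ∧ Icc 1 c₂ ⊆ p.1 ∧ 0 ∉ p.2 ∧ #p.2 = c₂

def IsSplitPair (c₁ c₂ : ℕ) (q : Finset ℕ × Finset ℕ) : Prop :=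
  Disjoint q.1 q.2 ∧ 0 ∉ q.1 ∧ 0 ∉ q.2 ∧ #q.1 = c₂ ∧ #q.1 + #q.2 = c₁

def pairSum (p : Finset ℕ × Finset ℕ) : ℕ := ∑ x ∈ p.1, x + ∑ x ∈ p.2, x

def splitRanks (p : Finset ℕ × Finset ℕ) : Finset ℕ × Finset ℕ :=
  (atRanks p.1 p.2, p.1 \ atRanks p.1 p.2)

def mergeRanks (q : Finset ℕ × Finset ℕ) : Finset ℕ × Finset ℕ :=
  (q.1 ∪ q.2, q.1.image (rank (q.1 ∪ q.2)))

def shiftPair (q : Finset ℕ × Finset ℕ) : Finset ℕ × Finset ℕ :=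
  (Icc 1 #q.1 ∪ q.2.image (shift q.1), q.1)

noncomputable def unshiftPair (p : Finset ℕ × Finset ℕ) : Finset ℕ × Finset ℕ :=
  (p.2, (p.1 \ Icc 1 #p.2).image (unshift p.2))

section Pairs

variable {c₁ c₂ : ℕ} {p q : Finset ℕ × Finset ℕ}

lemma isSplitPair_splitRanks (hp : IsVPair c₁ c₂ p) : IsSplitPair c₁ c₂ (splitRanks p) := by
  obtain ⟨h0, hc₁, hc₂, hU⟩ := hp
  have hsub : atRanks p.1 p.2 ⊆ p.1 := filter_subset _ _
  have hcard := card_image_of_injOn (rank_strictMonoOn.injOn.mono (coe_subset.2 hsub))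
  rw [image_rank_atRanks (by rwa [hc₁])] at hcard
  refine ⟨disjoint_sdiff, fun h => h0 (hsub h), fun h => h0 (sdiff_subset h),
    hcard.symm.trans hc₂, ?_⟩
  rw [splitRanks, add_comm, card_sdiff_add_card_eq_card hsub, hc₁]

lemma isVPair_mergeRanks (hq : IsSplitPair c₁ c₂ q) : IsVPair c₁ c₂ (mergeRanks q) := by
  obtain ⟨hdisj, h0₁, h0₂, hc₂, hc₁⟩ := hq
  have hunion : #(q.1 ∪ q.2) = c₁ := by rw [card_union_of_disjoint hdisj, hc₁]
  refine ⟨by simp [mergeRanks, h0₁, h0₂], hunion, ?_, ?_⟩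
  · rw [mergeRanks, card_image_of_injOn
      (rank_strictMonoOn.injOn.mono (coe_subset.2 subset_union_left)), hc₂]
  · exact image_subset_iff.2 fun s hs => hunion ▸ rank_mem_Icc (mem_union_left _ hs)

lemma mergeRanks_splitRanks (hp : IsVPair c₁ c₂ p) : mergeRanks (splitRanks p) = p := by
  obtain ⟨-, hc₁, -, hU⟩ := hp
  have hsub : atRanks p.1 p.2 ⊆ p.1 := filter_subset _ _
  simp only [mergeRanks, splitRanks]
  rw [union_sdiff_of_subset hsub, image_rank_atRanks (by rwa [hc₁])]

lemma splitRanks_mergeRanks (hq : IsSplitPair c₁ c₂ q) : splitRanks (mergeRanks q) = q := by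
  simp only [mergeRanks, splitRanks, atRanks_image_rank subset_union_left,
    union_sdiff_cancel_left hq.1]

lemma disjoint_Icc_image_shift (hq : IsSplitPair c₁ c₂ q) :
    Disjoint (Icc 1 #q.1) (q.2.image (shift q.1)) := by
  refine disjoint_left.2 fun x hx hx' => ?_
  obtain ⟨r, hr, rfl⟩ := mem_image.1 hx'
  have := card_lt_shift hq.2.1 (disjoint_right.1 hq.1 hr) (ne_of_mem_of_not_mem hr hq.2.2.1)
  exact absurd (mem_Icc.1 hx).2 this.not_ge

lemma card_image_shift (hq : IsSplitPair c₁ c₂ q) : #(q.2.image (shift q.1)) = #q.2 :=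
  card_image_of_injOn (shift_injOn.mono fun _ hr => disjoint_right.1 hq.1 hr)

lemma isWPair_shiftPair (hq : IsSplitPair c₁ c₂ q) : IsWPair c₁ c₂ (shiftPair q) := by
  have hcard : #(shiftPair q).1 = #q.1 + #q.2 := by
    rw [shiftPair, card_union_of_disjoint (disjoint_Icc_image_shift hq), Nat.card_Icc,
      card_image_shift hq, Nat.add_sub_cancel]
  obtain ⟨hdisj, h0₁, h0₂, hc₂, hc₁⟩ := hq
  refine ⟨fun h => ?_, hcard.trans hc₁, hc₂ ▸ subset_union_left, h0₁, hc₂⟩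
  rcases mem_union.1 h with h | h
  · simp at h
  · obtain ⟨r, hr, hr0⟩ := mem_image.1 h
    have := card_lt_shift h0₁ (disjoint_right.1 hdisj hr) (ne_of_mem_of_not_mem hr h0₂)
    omega

lemma lt_of_mem_sdiff_Icc {T : Finset ℕ} {n m : ℕ} (h0 : 0 ∉ T) (hm : m ∈ T \ Icc 1 n) :
    n < m := by
  obtain ⟨hmT, hmI⟩ := mem_sdiff.1 hm
  have : m ≠ 0 := ne_of_mem_of_not_mem hmT h0
  simp only [mem_Icc, not_and, not_le] at hmI
  exact hmI (Nat.one_le_iff_ne_zero.2 this)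

lemma isSplitPair_unshiftPair (hp : IsWPair c₁ c₂ p) : IsSplitPair c₁ c₂ (unshiftPair p) := by
  obtain ⟨h0₁, hc₁, hIcc, h0₂, hc₂⟩ := hp
  have hlt : ∀ m ∈ p.1 \ Icc 1 #p.2, #p.2 < m := fun m hm => lt_of_mem_sdiff_Icc h0₁ hm
  have hcard : #((p.1 \ Icc 1 #p.2).image (unshift p.2)) = #p.1 - #p.2 := by
    rw [card_image_of_injOn (unshift_injOn.mono fun m hm => (hlt m hm).le),
      card_sdiff_of_subset (hc₂ ▸ hIcc), Nat.card_Icc, Nat.add_sub_cancel]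
  have hle : #p.2 ≤ #p.1 := by simpa [hc₂] using card_le_card hIcc
  refine ⟨disjoint_right.2 fun x hx => ?_, h0₂, fun h => ?_, hc₂, ?_⟩
  · obtain ⟨m, -, rfl⟩ := mem_image.1 hx
    exact unshift_notMem _ _
  · obtain ⟨m, hm, hm0⟩ := mem_image.1 h
    exact unshift_ne_zero h0₂ (hlt m hm) hm0
  · show #p.2 + #((p.1 \ Icc 1 #p.2).image (unshift p.2)) = c₁
    rw [hcard]
    omega

lemma shiftPair_unshiftPair (hp : IsWPair c₁ c₂ p) : shiftPair (unshiftPair p) = p := by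
  obtain ⟨h0₁, -, hIcc, -, hc₂⟩ := hp
  simp only [shiftPair, unshiftPair, image_image]
  rw [image_congr (f := shift p.2 ∘ unshift p.2) (g := id)
    fun m hm => shift_unshift (lt_of_mem_sdiff_Icc h0₁ hm).le, image_id,
    union_sdiff_of_subset (hc₂ ▸ hIcc)]

lemma unshiftPair_shiftPair (hq : IsSplitPair c₁ c₂ q) : unshiftPair (shiftPair q) = q := by
  simp only [shiftPair, unshiftPair, union_sdiff_cancel_left (disjoint_Icc_image_shift hq),
    image_image]
  rw [image_congr (f := unshift q.1 ∘ shift q.1) (g := id)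
    fun r hr => unshift_shift (disjoint_right.1 hq.1 hr), image_id]

lemma pairSum_mergeRanks (hq : IsSplitPair c₁ c₂ q) :
    pairSum (mergeRanks q) = pairSum (shiftPair q) := by
  have hrank : ∑ s ∈ q.1, rank (q.1 ∪ q.2) s
      = ∑ i ∈ Icc 1 #q.1, i + ∑ s ∈ q.1, #{r ∈ q.2 | r < s} := by
    rw [← sum_rank_self, ← sum_add_distrib]
    exact sum_congr rfl fun s hs => rank_union hq.1 (disjoint_left.1 hq.1 hs)
  rw [pairSum, pairSum, mergeRanks, shiftPair, sum_union hq.1,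
    sum_image (rank_strictMonoOn.injOn.mono (coe_subset.2 subset_union_left)), hrank,
    sum_union (disjoint_Icc_image_shift hq),
    sum_image (shift_injOn.mono fun _ hr => disjoint_right.1 hq.1 hr), sum_shift]
  ring

end Pairs

noncomputable def vwPairEquiv (c₁ c₂ : ℕ) :
    {p // IsVPair c₁ c₂ p} ≃ {p // IsWPair c₁ c₂ p} where
  toFun p := ⟨shiftPair (splitRanks p.1), isWPair_shiftPair (isSplitPair_splitRanks p.2)⟩
  invFun p := ⟨mergeRanks (unshiftPair p.1), isVPair_mergeRanks (isSplitPair_unshiftPair p.2)⟩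
  left_inv p := Subtype.ext <| by
    simp only [unshiftPair_shiftPair (isSplitPair_splitRanks p.2), mergeRanks_splitRanks p.2]
  right_inv p := Subtype.ext <| by
    simp only [splitRanks_mergeRanks (isSplitPair_unshiftPair p.2), shiftPair_unshiftPair p.2]

lemma pairSum_vwPairEquiv {c₁ c₂ : ℕ} (p : {p // IsVPair c₁ c₂ p}) :
    pairSum (vwPairEquiv c₁ c₂ p).1 = pairSum p.1 := by
  have := pairSum_mergeRanks (isSplitPair_splitRanks p.2)
  rw [mergeRanks_splitRanks p.2] at this
  exact this.symm

def StageCond (ℓ : ℕ → ℕ) (t a : ℕ) (S : Finset ℕ) : Prop :=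
  0 ∉ S ∧ #S = ℓ a ∧ (a < t → Icc 1 (ℓ (a + 1)) ⊆ S) ∧ (t < a → S ⊆ Icc 1 (ℓ (a - 1)))

abbrev StageTuple (ℓ : ℕ → ℕ) (k t : ℕ) : Type :=
  {F : Fin k → Finset ℕ // ∀ a : Fin k, StageCond ℓ t a (F a)}

def tupleSum {k : ℕ} (F : Fin k → Finset ℕ) : ℕ := ∑ a, ∑ x ∈ F a, x

section Stages

variable (ℓ : ℕ → ℕ) {k t : ℕ}

lemma stageCond_iff_succ {a : ℕ} (ha : a ≠ t) (ha' : a ≠ t + 1) (S : Finset ℕ) :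
    StageCond ℓ t a S ↔ StageCond ℓ (t + 1) a S := by
  have h₁ : a < t ↔ a < t + 1 := by omega
  have h₂ : t < a ↔ t + 1 < a := by omega
  rw [StageCond, StageCond, h₁, h₂]

lemma stageCond_pair_iff (p : Finset ℕ × Finset ℕ) :
    (StageCond ℓ t t p.1 ∧ StageCond ℓ t (t + 1) p.2) ↔ IsVPair (ℓ t) (ℓ (t + 1)) p := by
  simp only [StageCond, IsVPair, lt_irrefl, lt_add_one, Nat.add_sub_cancel, IsEmpty.forall_iff,
    not_lt_of_gt (lt_add_one t), forall_const, and_true, true_and, and_assoc]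
  exact ⟨fun ⟨h0, h1, _, h2, h3⟩ => ⟨h0, h1, h2, h3⟩,
    fun ⟨h0, h1, h2, h3⟩ => ⟨h0, h1, fun h => by simpa using h3 h, h2, h3⟩⟩

lemma stageCond_succ_pair_iff (p : Finset ℕ × Finset ℕ) :
    (StageCond ℓ (t + 1) t p.1 ∧ StageCond ℓ (t + 1) (t + 1) p.2) ↔
      IsWPair (ℓ t) (ℓ (t + 1)) p := by
  simp only [StageCond, IsWPair, lt_irrefl, lt_add_one, IsEmpty.forall_iff,
    not_lt_of_gt (lt_add_one t), forall_const, and_true, and_assoc]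

noncomputable def stageEquiv (ht : t + 1 < k) : StageTuple ℓ k t ≃ StageTuple ℓ k (t + 1) :=
  updatePairEquiv (i := ⟨t, by omega⟩) (j := ⟨t + 1, ht⟩) (by simp [Fin.ext_iff])
    (fun _ hi hj => stageCond_iff_succ ℓ (fun h => hi (Fin.ext h)) (fun h => hj (Fin.ext h)))
    (((Equiv.subtypeEquivRight (stageCond_pair_iff ℓ)).trans (vwPairEquiv _ _)).trans
      (Equiv.subtypeEquivRight fun p => (stageCond_succ_pair_iff ℓ p).symm))

lemma tupleSum_stageEquiv (ht : t + 1 < k) (F : StageTuple ℓ k t) :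
    tupleSum (stageEquiv ℓ ht F).1 = tupleSum F.1 :=
  sum_updatePairEquiv _ _ _ (fun S => ∑ x ∈ S, x) (fun _ => pairSum_vwPairEquiv _) F

lemma exists_stageEquiv (ht : t ≤ k - 1) :
    ∃ e : StageTuple ℓ k 0 ≃ StageTuple ℓ k t, ∀ F, tupleSum (e F).1 = tupleSum F.1 := by
  induction t with
  | zero => exact ⟨Equiv.refl _, fun _ => rfl⟩
  | succ t ih =>
    obtain ⟨e, he⟩ := ih (by omega)
    exact ⟨e.trans (stageEquiv ℓ (by omega)), fun F => (tupleSum_stageEquiv ℓ _ _).trans (he F)⟩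

lemma forall_stageCond_zero_iff (F : Fin k → Finset ℕ) :
    (∀ a : Fin k, StageCond ℓ 0 a (F a)) ↔ (∀ a : Fin k, 0 ∉ F a ∧ #(F a) = ℓ a) ∧
      ∀ (a : Fin k) (h : a.val + 1 < k), F ⟨a.val + 1, h⟩ ⊆ Icc 1 (ℓ a) := by
  refine ⟨fun hF => ⟨fun a => ⟨(hF a).1, (hF a).2.1⟩,
      fun a h => (hF ⟨a + 1, h⟩).2.2.2 a.val.succ_pos⟩,
    fun ⟨hF, hV⟩ a => ⟨(hF a).1, (hF a).2, fun h => absurd h a.val.not_lt_zero, fun h => ?_⟩⟩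
  have := hV ⟨a.val - 1, by omega⟩ (by simp only; omega)
  rwa [show (⟨a.val - 1 + 1, _⟩ : Fin k) = a from Fin.ext (by simp only; omega)] at this

lemma forall_stageCond_pred_iff (F : Fin k → Finset ℕ) :
    (∀ a : Fin k, StageCond ℓ (k - 1) a (F a)) ↔ (∀ a : Fin k, 0 ∉ F a ∧ #(F a) = ℓ a) ∧
      ∀ (a : Fin k) (_ : a.val + 1 < k), Icc 1 (ℓ (a + 1)) ⊆ F a :=
  ⟨fun hF => ⟨fun a => ⟨(hF a).1, (hF a).2.1⟩, fun a h => (hF a).2.2.1 (by omega)⟩,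
    fun ⟨hF, hW⟩ a => ⟨(hF a).1, (hF a).2, fun h => hW a (by omega),
      fun h => absurd h (by omega)⟩⟩

end Stages

section Conditions

variable {k : ℕ} (ℓ : ℕ → ℕ) (N : ℕ) (L : Fin k → StrictPartition)

lemma tupleSum_toFinset : tupleSum (fun a => (L a).parts.toFinset) = ∑ a, (L a).size :=
  sum_congr rfl fun a _ => (L a).sum_toFinset

lemma vCondition_iff :
    ((∀ a : Fin k, (L a).len = ℓ a) ∧
        (∀ (a : Fin k) (h : a.val + 1 < k), (L ⟨a.val + 1, h⟩).first ≤ (L a).len) ∧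
        (∑ a, (L a).size) = N) ↔
      (∀ a : Fin k, StageCond ℓ 0 a (L a).parts.toFinset) ∧
        tupleSum (fun a => (L a).parts.toFinset) = N := by
  simp only [forall_stageCond_zero_iff, tupleSum_toFinset, StrictPartition.zero_notMem_toFinset,
    StrictPartition.card_toFinset, StrictPartition.first_le_iff, not_false_eq_true, true_and]
  refine ⟨fun ⟨hlen, hV, hN⟩ => ⟨⟨hlen, fun a h => ?_⟩, hN⟩,
    fun ⟨⟨hlen, hV⟩, hN⟩ => ⟨hlen, fun a h => ?_, hN⟩⟩
  · rw [← hlen a]; exact hV a h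
  · rw [hlen a]; exact hV a h

lemma wCondition_iff :
    ((∀ a : Fin k, (L a).len = ℓ a) ∧
        (∀ (a : Fin k) (h : a.val + 1 < k),
          (L a).parts.drop ((L a).len - (L ⟨a.val + 1, h⟩).len) =
            staircase ((L ⟨a.val + 1, h⟩).len)) ∧
        (∑ a, (L a).size) = N) ↔
      (∀ a : Fin k, StageCond ℓ (k - 1) a (L a).parts.toFinset) ∧
        tupleSum (fun a => (L a).parts.toFinset) = N := by
  simp only [forall_stageCond_pred_iff, tupleSum_toFinset, StrictPartition.zero_notMem_toFinset,
    StrictPartition.card_toFinset, StrictPartition.drop_eq_staircase_iff, not_false_eq_true,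
    true_and]
  refine ⟨fun ⟨hlen, hW, hN⟩ => ⟨⟨hlen, fun a h => ?_⟩, hN⟩,
    fun ⟨⟨hlen, hW⟩, hN⟩ => ⟨hlen, fun a h => ?_, hN⟩⟩
  · rw [← hlen ⟨a.val + 1, h⟩]; exact hW a h
  · rw [hlen ⟨a.val + 1, h⟩]; exact hW a h

end Conditions

end StaircaseBijection

open StaircaseBijection in
/-- Fix `j_1, …, j_k ≥ 0` (indexed by `0, …, k-1`). Among `k`-tuples of strict
partitions with `ℓ(λ^{(i)}) = j_i + ⋯ + j_k`, the set `V` (tuples with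
`ℓ(λ^{(i)}) ≥ (λ^{(i+1)})₁`) and the set `W` (tuples whose last `ℓ(λ^{(i+1)})`
parts of `λ^{(i)}` form the staircase `Δ_{ℓ(λ^{(i+1)})}`) have a size-preserving
bijection: for every total size `N` they have equally many elements. -/
theorem V_equinumerous_W (k : ℕ) (j : ℕ → ℕ) (N : ℕ) :
    Nat.card {L : Fin k → StrictPartition //
        (∀ a : Fin k, (L a).len = ∑ b ∈ Finset.Ico a.val k, j b) ∧
        (∀ (a : Fin k) (h : a.val + 1 < k), (L ⟨a.val + 1, h⟩).first ≤ (L a).len) ∧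
        (∑ a, (L a).size) = N} =
      Nat.card {L : Fin k → StrictPartition //
        (∀ a : Fin k, (L a).len = ∑ b ∈ Finset.Ico a.val k, j b) ∧
        (∀ (a : Fin k) (h : a.val + 1 < k),
          (L a).parts.drop ((L a).len - (L ⟨a.val + 1, h⟩).len) =
            staircase ((L ⟨a.val + 1, h⟩).len)) ∧
        (∑ a, (L a).size) = N} := by
  let ℓ : ℕ → ℕ := fun a => ∑ b ∈ Finset.Ico a k, j b
  have hV := StrictPartition.card_tuples_eq _
    (fun F => (∀ a : Fin k, StageCond ℓ 0 a (F a)) ∧ tupleSum F = N)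
    (vCondition_iff ℓ N) fun F hF a => (hF.1 a).1
  have hW := StrictPartition.card_tuples_eq _
    (fun F => (∀ a : Fin k, StageCond ℓ (k - 1) a (F a)) ∧ tupleSum F = N)
    (wCondition_iff ℓ N) fun F hF a => (hF.1 a).1
  obtain ⟨e, he⟩ := exists_stageEquiv ℓ (k := k) le_rfl
  rw [hV, hW]
  exact Nat.card_subtype_and_eq_of_equiv tupleSum e he N
end

section
/- For j_1, …, j_k ≥ 0, the generating function ∑_{𝛌∈W} q^{|𝛌|}, where W is the set of k-tuples of strict partitions with ℓ(λ^{(i)}) = j_i + ⋯ + j_k whose last ℓ(λ^{(i+1)}) parts form the staircase Δ_{ℓ(λ^{(i+1)})} (for 1 ≤ i < k), equals ∏_{a=1}^k q^{T(j_a+⋯+j_k)} / (q;q)_{j_a}, where T(m) = m(m+1)/2. -/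
open Finset PowerSeries

/-!
Once `ℓ(λ^{(a)}) = s_a := j_a + ⋯ + j_{k-1}` is imposed, the staircase condition on `λ^{(a)}`
only involves `s_{a+1}`, so `W` is a product over `a` of the sets of strict partitions with
`j_a + s_{a+1}` parts ending in `Δ_{s_{a+1}}`, and the generating function factorises.
Such a partition is determined by its gaps `g_t = λ_t - λ_{t+1} - 1` for `t < j_a`, which are
arbitrary, and `|λ| = T(s_a) + ∑_t (t + 1) g_t` since `g_t` raises the `t + 1` largest parts.
Hence its factor is `q^{T(s_a)} ∏_{t < j_a} 1/(1 - q^{t+1}) = q^{T(s_a)}/(q;q)_{j_a}`.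
-/

section CountingSeries

variable {α β : Type*}

-- `Nat.card` is `0` on an infinite fibre, hence the finiteness hypotheses below.
noncomputable def countingSeries (w : α → ℕ) : PowerSeries ℚ :=
  PowerSeries.mk fun N => (Nat.card {a // w a = N} : ℚ)

def fiberEquivOfWeight (e : α ≃ β) {w : α → ℕ} {v : β → ℕ} (h : ∀ a, v (e a) = w a) (N : ℕ) :
    {a // w a = N} ≃ {b // v b = N} :=
  e.subtypeEquiv fun a => by rw [h]

theorem countingSeries_congr (e : α ≃ β) {w : α → ℕ} {v : β → ℕ} (h : ∀ a, v (e a) = w a) :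
    countingSeries v = countingSeries w := by
  ext N
  simp only [countingSeries, coeff_mk, Nat.card_congr (fiberEquivOfWeight e h N)]

theorem finite_fiber_const_add {w : α → ℕ} [∀ N, Finite {a // w a = N}] (c N : ℕ) :
    Finite {a // c + w a = N} :=
  Finite.of_injective (fun a => (⟨a.1, by omega⟩ : {a // w a = N - c}))
    fun a b h => Subtype.ext (by simpa using congrArg Subtype.val h)

theorem countingSeries_const_add (w : α → ℕ) (c : ℕ) :
    countingSeries (fun a => c + w a) = X ^ c * countingSeries w := by
  ext N
  rw [coeff_X_pow_mul', countingSeries, countingSeries, coeff_mk]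
  split_ifs with h
  · rw [coeff_mk,
      Nat.card_congr (Equiv.subtypeEquivRight (q := fun a => w a = N - c) fun a => by omega)]
  · have : IsEmpty {a // c + w a = N} := ⟨fun a => h (by omega)⟩
    simp

def fiberSumEquivSigma (w : α → ℕ) (v : β → ℕ) (N : ℕ) :
    {p : α × β // w p.1 + v p.2 = N} ≃
      Σ ij : antidiagonal N, {a // w a = ij.1.1} × {b // v b = ij.1.2} where
  toFun p := ⟨⟨(w p.1.1, v p.1.2), mem_antidiagonal.2 p.2⟩, ⟨p.1.1, rfl⟩, ⟨p.1.2, rfl⟩⟩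
  invFun s := ⟨(s.2.1, s.2.2), by rw [s.2.1.2, s.2.2.2]; exact mem_antidiagonal.1 s.1.2⟩
  left_inv p := rfl
  right_inv := by
    rintro ⟨⟨⟨i, j⟩, hij⟩, ⟨a, ha⟩, ⟨b, hb⟩⟩
    dsimp only at ha hb
    subst ha hb
    rfl

variable {w : α → ℕ} {v : β → ℕ} [∀ N, Finite {a // w a = N}] [∀ N, Finite {b // v b = N}]

theorem finite_fiber_prod (N : ℕ) : Finite {p : α × β // w p.1 + v p.2 = N} :=
  Finite.of_equiv _ (fiberSumEquivSigma w v N).symm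

theorem countingSeries_prod :
    countingSeries (fun p : α × β => w p.1 + v p.2) = countingSeries w * countingSeries v := by
  ext N
  rw [coeff_mul, countingSeries, coeff_mk, Nat.card_congr (fiberSumEquivSigma w v N),
    Nat.card_sigma, ← sum_coe_sort (antidiagonal N)]
  simp [countingSeries, Nat.card_prod]

theorem finite_fiber_pi {k : ℕ} {α : Fin k → Type*} (w : ∀ a, α a → ℕ)
    [∀ a N, Finite {x // w a x = N}] (N : ℕ) : Finite {L : ∀ a, α a // ∑ a, w a (L a) = N} := by
  induction k generalizing N with
  | zero => exact Finite.of_subsingleton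
  | succ k ih =>
    have := ih (fun a => w a.succ)
    have := finite_fiber_prod (w := w 0)
      (v := fun L : ∀ a : Fin k, α a.succ => ∑ a, w a.succ (L a)) N
    exact Finite.of_equiv _ (fiberEquivOfWeight (Fin.consEquiv α)
      (w := fun p => w 0 p.1 + ∑ a, w a.succ (p.2 a))
      (fun p => by simp [Fin.sum_univ_succ, Fin.consEquiv]) N)

theorem countingSeries_pi {k : ℕ} {α : Fin k → Type*} (w : ∀ a, α a → ℕ)
    [∀ a N, Finite {x // w a x = N}] :
    countingSeries (fun L : ∀ a, α a => ∑ a, w a (L a)) = ∏ a, countingSeries (w a) := by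
  induction k with
  | zero =>
    ext N
    simp only [countingSeries, univ_eq_empty, sum_empty, prod_empty, coeff_mk, coeff_one]
    split_ifs with h <;> simp [h, eq_comm]
  | succ k ih =>
    have := finite_fiber_pi (fun a : Fin k => w a.succ)
    rw [Fin.prod_univ_succ, ← ih (fun a => w a.succ), ← countingSeries_prod]
    exact countingSeries_congr (Fin.consEquiv α) fun p => by
      simp [Fin.sum_univ_succ, Fin.consEquiv]

end CountingSeries

theorem card_fiber_mul_left {c : ℕ} (hc : 0 < c) (N : ℕ) :
    Nat.card {n // c * n = N} = if c ∣ N then 1 else 0 := by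
  split_ifs with h
  · obtain ⟨d, rfl⟩ := h
    exact Nat.card_eq_one_iff_exists.2
      ⟨⟨d, rfl⟩, fun x => Subtype.ext (Nat.eq_of_mul_eq_mul_left hc x.2)⟩
  · have : IsEmpty {n // c * n = N} := ⟨fun x => h ⟨x.1, x.2.symm⟩⟩
    exact Nat.card_of_isEmpty

theorem finite_fiber_mul_left {c : ℕ} (hc : 0 < c) (N : ℕ) : Finite {n // c * n = N} :=
  Finite.of_injective
    (fun x => (⟨x.1, by have := Nat.le_mul_of_pos_left x.1 hc; have := x.2; omega⟩ : Fin (N + 1)))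
    fun a b h => Subtype.ext (by simpa using congrArg Fin.val h)

theorem countingSeries_mul_left {c : ℕ} (hc : 0 < c) :
    countingSeries (fun n : ℕ => c * n) = (1 - X ^ c)⁻¹ := by
  rw [PowerSeries.eq_inv_iff_mul_eq_one (by simp [hc.ne'])]
  ext N
  rw [mul_sub, mul_one, map_sub, coeff_mul_X_pow', coeff_one]
  simp only [countingSeries, coeff_mk, card_fiber_mul_left hc]
  rcases Nat.eq_zero_or_pos N with rfl | hN
  · simp [hc.ne']
  · by_cases hcN : c ≤ N
    · have : c ∣ N ∨ N ≤ c ↔ c ∣ N :=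
        ⟨fun h => h.elim id fun h' => le_antisymm h' hcN ▸ dvd_rfl, Or.inl⟩
      simp [hcN, hN.ne', this]
    · have : ¬ c ∣ N := fun h => hcN (Nat.le_of_dvd hN h)
      simp [*, hN.ne']

def multiplicitySize {m : ℕ} (g : Fin m → ℕ) : ℕ := ∑ t, (t + 1) * g t

theorem inv_qPoch (m : ℕ) : (qPoch m)⁻¹ = ∏ t : Fin m, (1 - X ^ ((t : ℕ) + 1))⁻¹ := by
  rw [PowerSeries.inv_eq_iff_mul_eq_one (by simp [qPoch, map_prod]), qPoch,
    ← Fin.prod_univ_eq_prod_range, ← prod_mul_distrib]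
  exact prod_eq_one fun t _ => PowerSeries.inv_mul_cancel _ (by simp)

theorem finite_fiber_multiplicitySize (m N : ℕ) :
    Finite {g : Fin m → ℕ // multiplicitySize g = N} :=
  have := fun t : Fin m => finite_fiber_mul_left (c := t + 1) (by omega)
  finite_fiber_pi (fun (t : Fin m) (n : ℕ) => (t + 1) * n) N

theorem countingSeries_multiplicitySize (m : ℕ) :
    countingSeries (multiplicitySize (m := m)) = (qPoch m)⁻¹ := by
  have := fun t : Fin m => finite_fiber_mul_left (c := t + 1) (by omega)
  calc countingSeries multiplicitySize
      = ∏ t : Fin m, countingSeries fun n : ℕ => (t + 1) * n := countingSeries_pi _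
    _ = (qPoch m)⁻¹ := by
      rw [inv_qPoch]
      exact prod_congr rfl fun t _ => countingSeries_mul_left (by omega)

theorem List.ext_getD_of_length_eq {α : Type*} {l₁ l₂ : List α} (d : α)
    (hl : l₁.length = l₂.length) (h : ∀ i < l₁.length, l₁.getD i d = l₂.getD i d) : l₁ = l₂ :=
  List.ext_getElem hl fun i h₁ h₂ => by
    rw [← List.getD_eq_getElem _ d h₁, ← List.getD_eq_getElem _ d h₂, h i h₁]

theorem StrictPartition.ext_parts {μ ν : StrictPartition} (h : μ.parts = ν.parts) : μ = ν := by
  cases μ; cases ν; congr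

theorem StrictPartition.getD_succ_lt_getD (μ : StrictPartition) {i : ℕ} (hi : i < μ.len) :
    μ.parts.getD (i + 1) 0 < μ.parts.getD i 0 := by
  rw [List.getD_eq_getElem _ _ hi]
  by_cases h : i + 1 < μ.len
  · rw [List.getD_eq_getElem _ _ h]
    exact List.pairwise_iff_getElem.1 μ.sorted _ _ _ _ (Nat.lt_succ_self i)
  · rw [List.getD_eq_default _ _ (not_lt.1 h)]
    exact μ.pos _ (List.getElem_mem _)

-- Truncated subtraction makes this hold past the end of the list as well.
theorem getD_staircase (n i : ℕ) : (staircase n).getD i 0 = n - i := by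
  rw [List.getD_eq_getElem?_getD]
  rcases lt_or_ge i n with h | h
  · have : n - 1 - i + 1 = n - i := by omega
    simp [staircase, h, this]
  · simp [staircase, h]

theorem sum_range_sub_eq_triangle (M : ℕ) : ∑ i ∈ range M, (M - i) = M * (M + 1) / 2 := by
  have h := sum_range_reflect (fun i => i) (M + 1)
  simp only [add_tsub_cancel_right] at h
  rw [sum_range_succ, Nat.sub_self, add_zero] at h
  rw [h, sum_range_id, add_tsub_cancel_right, mul_comm]

section TailSum

variable {m : ℕ} (g : Fin m → ℕ)

def tailSum (i : ℕ) : ℕ := ∑ t : Fin m with i ≤ t.val, g t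

theorem tailSum_eq_zero {i : ℕ} (h : m ≤ i) : tailSum g i = 0 :=
  sum_eq_zero fun t ht => absurd (mem_filter.1 ht).2 (by omega)

theorem tailSum_antitone : Antitone (tailSum g) := fun _ _ h =>
  sum_le_sum_of_subset (monotone_filter_right _ fun _ _ ht => le_trans h ht)

theorem tailSum_eq_add (t : Fin m) : tailSum g t = g t + tailSum g (t + 1) := by
  have : univ.filter (fun s : Fin m => t.val ≤ s.val) =
      insert t (univ.filter fun s : Fin m => t.val + 1 ≤ s.val) := by
    ext s
    simp only [mem_filter, mem_univ, true_and, mem_insert, Fin.ext_iff]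
    omega
  rw [tailSum, this, sum_insert (by simp), tailSum]

theorem sum_range_tailSum {M : ℕ} (h : m ≤ M) :
    ∑ i ∈ range M, tailSum g i = multiplicitySize g := by
  simp only [tailSum, sum_filter]
  rw [sum_comm]
  refine sum_congr rfl fun t _ => ?_
  have : (range M).filter (· ≤ t.val) = range (t + 1) := by
    ext i
    simp only [mem_filter, mem_range]
    omega
  rw [← sum_filter, sum_const, smul_eq_mul, this, card_range]

end TailSum

def HasStaircaseTail (m n : ℕ) (μ : StrictPartition) : Prop :=
  μ.len = m + n ∧ μ.parts.drop m = staircase n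

section StaircaseTail

variable {m n : ℕ}

def stairParts (m n : ℕ) (g : Fin m → ℕ) : List ℕ :=
  List.ofFn fun i : Fin (m + n) => (m + n - i) + tailSum g i

theorem length_stairParts (g : Fin m → ℕ) : (stairParts m n g).length = m + n := by
  simp [stairParts]

theorem getD_stairParts (g : Fin m → ℕ) {i : ℕ} (hi : i ≤ m + n) :
    (stairParts m n g).getD i 0 = (m + n - i) + tailSum g i := by
  rcases hi.lt_or_eq with hi | rfl
  · simp [stairParts, List.getD_eq_getElem?_getD, hi]
  · rw [List.getD_eq_default _ _ (length_stairParts g).le, tailSum_eq_zero g (by omega)]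
    simp

theorem sum_stairParts (g : Fin m → ℕ) :
    (stairParts m n g).sum = (m + n) * (m + n + 1) / 2 + multiplicitySize g := by
  rw [stairParts, List.sum_ofFn, sum_add_distrib,
    Fin.sum_univ_eq_sum_range (fun i => m + n - i), Fin.sum_univ_eq_sum_range (tailSum g),
    sum_range_sub_eq_triangle, sum_range_tailSum g (by omega)]

@[simps]
def stairPartition (m n : ℕ) (g : Fin m → ℕ) : StrictPartition where
  parts := stairParts m n g
  pos := by
    simp only [stairParts, List.mem_ofFn, forall_exists_index]
    rintro _ i rfl
    omega
  sorted := by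
    rw [stairParts, List.pairwise_ofFn]
    intro i j hij
    have := tailSum_antitone g hij.le
    omega

theorem hasStaircaseTail_stairPartition (g : Fin m → ℕ) :
    HasStaircaseTail m n (stairPartition m n g) := by
  refine ⟨length_stairParts g, List.ext_getD_of_length_eq 0 ?_ fun i hi => ?_⟩
  · simp [length_stairParts, staircase]
  simp only [stairPartition_parts, List.length_drop, length_stairParts] at hi ⊢
  rw [List.getD_eq_getElem?_getD, List.getElem?_drop, ← List.getD_eq_getElem?_getD,
    getD_staircase, getD_stairParts g (by omega), tailSum_eq_zero g (by omega)]
  omega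

def gapVector (μ : StrictPartition) (m : ℕ) (t : Fin m) : ℕ :=
  μ.parts.getD t 0 - μ.parts.getD (t + 1) 0 - 1

theorem gapVector_stairPartition (g : Fin m → ℕ) : gapVector (stairPartition m n g) m = g := by
  funext t
  have := tailSum_eq_add g t
  rw [gapVector, stairPartition_parts, getD_stairParts g (by omega), getD_stairParts g (by omega)]
  omega

namespace HasStaircaseTail

variable {μ : StrictPartition} (h : HasStaircaseTail m n μ)
include h

theorem getD_of_le {i : ℕ} (hi : m ≤ i) : μ.parts.getD i 0 = m + n - i := by
  have := congrArg (fun l => l.getD (i - m) 0) h.2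
  simp only [List.getD_eq_getElem?_getD, List.getElem?_drop, Nat.add_sub_cancel' hi] at this
  rw [List.getD_eq_getElem?_getD, this, ← List.getD_eq_getElem?_getD, getD_staircase]
  omega

theorem getD_eq {i : ℕ} (hi : i ≤ m) :
    μ.parts.getD i 0 = (m + n - i) + tailSum (gapVector μ m) i := by
  induction hi using Nat.decreasingInduction with
  | self => rw [h.getD_of_le le_rfl, tailSum_eq_zero _ le_rfl, add_zero]
  | of_succ i hi ih =>
    have hlt := μ.getD_succ_lt_getD (i := i) (by rw [h.1]; omega)
    have := tailSum_eq_add (gapVector μ m) ⟨i, hi⟩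
    simp only [gapVector] at this
    omega

theorem stairPartition_gapVector : stairPartition m n (gapVector μ m) = μ := by
  refine StrictPartition.ext_parts (List.ext_getD_of_length_eq 0 ?_ fun i hi => ?_)
  · rw [stairPartition_parts, length_stairParts, ← h.1, StrictPartition.len]
  · rw [stairPartition_parts, length_stairParts] at hi
    rw [stairPartition_parts, getD_stairParts _ hi.le]
    rcases le_or_gt m i with hmi | him
    · rw [h.getD_of_le hmi, tailSum_eq_zero _ hmi, add_zero]
    · rw [h.getD_eq him.le]

end HasStaircaseTail

def staircaseTailEquiv (m n : ℕ) : {μ // HasStaircaseTail m n μ} ≃ (Fin m → ℕ) where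
  toFun μ := gapVector μ.1 m
  invFun g := ⟨stairPartition m n g, hasStaircaseTail_stairPartition g⟩
  left_inv μ := Subtype.ext μ.2.stairPartition_gapVector
  right_inv := gapVector_stairPartition

theorem size_staircaseTailEquiv_symm (g : Fin m → ℕ) :
    ((staircaseTailEquiv m n).symm g).1.size = (m + n) * (m + n + 1) / 2 + multiplicitySize g :=
  sum_stairParts g

end StaircaseTail

theorem finite_fiber_staircaseTail (m n N : ℕ) :
    Finite {μ : {μ // HasStaircaseTail m n μ} // μ.1.size = N} :=
  have := finite_fiber_multiplicitySize m
  have := finite_fiber_const_add (w := multiplicitySize (m := m)) ((m + n) * (m + n + 1) / 2)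
  Finite.of_equiv _
    (fiberEquivOfWeight (staircaseTailEquiv m n).symm size_staircaseTailEquiv_symm N)

theorem countingSeries_staircaseTail (m n : ℕ) :
    countingSeries (fun μ : {μ // HasStaircaseTail m n μ} => μ.1.size) =
      X ^ ((m + n) * (m + n + 1) / 2) * (qPoch m)⁻¹ := by
  rw [countingSeries_congr (staircaseTailEquiv m n).symm size_staircaseTailEquiv_symm,
    countingSeries_const_add, countingSeries_multiplicitySize]

theorem staircase_conditions_iff (k : ℕ) (j : ℕ → ℕ) (L : Fin k → StrictPartition) :
    ((∀ a : Fin k, (L a).len = ∑ b ∈ Ico a.val k, j b) ∧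
      ∀ (a : Fin k) (h : a.val + 1 < k),
        (L a).parts.drop ((L a).len - (L ⟨a.val + 1, h⟩).len) =
          staircase ((L ⟨a.val + 1, h⟩).len)) ↔
    ∀ a : Fin k, HasStaircaseTail (j a) (∑ b ∈ Ico (a.val + 1) k, j b) (L a) := by
  have hsum (a : Fin k) : ∑ b ∈ Ico a.val k, j b = j a + ∑ b ∈ Ico (a.val + 1) k, j b :=
    sum_eq_sum_Ico_succ_bot a.2 j
  constructor
  · rintro ⟨hlen, hdrop⟩ a
    refine ⟨(hlen a).trans (hsum a), ?_⟩
    by_cases h : a.val + 1 < k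
    · simpa [hlen, hsum] using hdrop a h
    · have hnil : Ico (a.val + 1) k = ∅ := Ico_eq_empty (by omega)
      have hla : (L a).len = j a := by rw [hlen, hsum, hnil, sum_empty, add_zero]
      rw [hnil, sum_empty]
      exact List.drop_eq_nil_of_le hla.le
  · intro hL
    have hlen (a : Fin k) : (L a).len = ∑ b ∈ Ico a.val k, j b := (hL a).1.trans (hsum a).symm
    refine ⟨hlen, fun a h => ?_⟩
    simpa [hlen, hsum] using (hL a).2

/-- `∑_{𝛌 ∈ W} q^{|𝛌|} = ∏_{a=1}^k q^{T(j_a+⋯+j_k)} / (q;q)_{j_a}` where `W` is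
the set of `k`-tuples of strict partitions with `ℓ(λ^{(i)}) = j_i + ⋯ + j_k`
whose last `ℓ(λ^{(i+1)})` parts form the staircase `Δ_{ℓ(λ^{(i+1)})}`, and
`T(m) = m(m+1)/2`. (Indices run over `0, …, k-1`.) -/
theorem W_gf (k : ℕ) (j : ℕ → ℕ) :
    PowerSeries.mk (fun N =>
        (Nat.card {L : Fin k → StrictPartition //
          (∀ a : Fin k, (L a).len = ∑ b ∈ Finset.Ico a.val k, j b) ∧
          (∀ (a : Fin k) (h : a.val + 1 < k),
            (L a).parts.drop ((L a).len - (L ⟨a.val + 1, h⟩).len) =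
              staircase ((L ⟨a.val + 1, h⟩).len)) ∧
          (∑ a, (L a).size) = N} : ℚ)) =
      ∏ a ∈ Finset.range k,
        (PowerSeries.X : PowerSeries ℚ) ^
            ((∑ b ∈ Finset.Ico a k, j b) * ((∑ b ∈ Finset.Ico a k, j b) + 1) / 2) *
          (qPoch (j a))⁻¹ := by
  let Tail (a : Fin k) := {μ // HasStaircaseTail (j a) (∑ b ∈ Ico (a.val + 1) k, j b) μ}
  have := fun a : Fin k => finite_fiber_staircaseTail (j a) (∑ b ∈ Ico (a.val + 1) k, j b)
  calc _ = countingSeries (fun L : ∀ a, Tail a => ∑ a, (L a).1.size) := by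
        ext N
        simp only [countingSeries, coeff_mk]
        exact congrArg Nat.cast <| Nat.card_congr <|
          (Equiv.subtypeEquivRight fun L => by rw [← and_assoc, staircase_conditions_iff]).trans
            ((Equiv.subtypeSubtypeEquivSubtypeInter _ _).symm.trans
              (Equiv.subtypeEquiv Equiv.subtypePiEquivPi fun L => Iff.rfl))
    _ = ∏ a : Fin k, X ^ ((∑ b ∈ Ico a.val k, j b) * ((∑ b ∈ Ico a.val k, j b) + 1) / 2) *
          (qPoch (j a))⁻¹ := by
        rw [countingSeries_pi fun a (μ : Tail a) => μ.1.size]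
        refine prod_congr rfl fun a _ => ?_
        rw [countingSeries_staircaseTail, ← sum_eq_sum_Ico_succ_bot a.2]
    _ = _ := Fin.prod_univ_eq_prod_range (fun a => X ^ ((∑ b ∈ Ico a k, j b) *
          ((∑ b ∈ Ico a k, j b) + 1) / 2) * (qPoch (j a))⁻¹) k
end

section
/- Define g_{2s} = q^{s(s+1)}/(q;q)_s for s ≥ 0 and g_M = 0 for all other integers M. Then for every integer M, (1 − q^M) g_M − q^M(1+q) g_{M−2} + q^{2M−1} g_{M−4} = 0. -/
open Finset

/-- `g_{2s} = q^{s(s+1)}/(q;q)_s` for `s ≥ 0`, and `g_M = 0` for all other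
integers `M`, as rational functions in `q`. -/
noncomputable def gM (M : ℤ) : RatFunc ℚ :=
  if 0 ≤ M ∧ 2 ∣ M then
    (RatFunc.X : RatFunc ℚ) ^ (M.toNat / 2 * (M.toNat / 2 + 1)) /
      ∏ j ∈ Finset.range (M.toNat / 2), (1 - (RatFunc.X : RatFunc ℚ) ^ (j + 1))
  else 0

/-!
The recurrence follows from the first-order relation `(1 - q^(r+1)) g_(2r+2) = q^(2r+2) g_(2r)`,
valid for every integer `r`: for `r ≥ 0` it is `(q;q)_(r+1) = (q;q)_r (1 - q^(r+1))` together
with `(r+1)(r+2) = (2r+2) + r(r+1)`, and for `r < 0` both sides vanish. For `M = 2r + 4`,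
applying it at `r + 1` and at `r` reduces the three-term recurrence to a polynomial identity in
`q` and `q^r`; for odd `M` all three terms vanish.
-/

namespace RatFunc

variable {K : Type*} [Field K]

theorem one_sub_X_pow_ne_zero {n : ℕ} (hn : n ≠ 0) : (1 - X ^ n : RatFunc K) ≠ 0 := by
  have hpoly : (Polynomial.X ^ n - Polynomial.C 1 : Polynomial K) ≠ 0 :=
    Polynomial.X_pow_sub_C_ne_zero (Nat.pos_of_ne_zero hn) 1
  rw [← neg_sub, neg_ne_zero]
  simpa using algebraMap_ne_zero hpoly

end RatFunc

open RatFunc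

/-- The `q`-Pochhammer symbol `(q;q)_s`. -/
noncomputable def qPochhammer (K : Type*) [Field K] (s : ℕ) : RatFunc K :=
  ∏ j ∈ range s, (1 - X ^ (j + 1))

theorem qPochhammer_succ (K : Type*) [Field K] (s : ℕ) :
    qPochhammer K (s + 1) = qPochhammer K s * (1 - X ^ (s + 1)) :=
  prod_range_succ _ s

theorem qPochhammer_ne_zero (K : Type*) [Field K] (s : ℕ) : qPochhammer K s ≠ 0 :=
  prod_ne_zero_iff.mpr fun j _ => one_sub_X_pow_ne_zero j.succ_ne_zero

theorem gM_two_mul (s : ℕ) : gM (2 * s) = X ^ (s * (s + 1)) / qPochhammer ℚ s := by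
  have hs : (2 * (s : ℤ)).toNat / 2 = s := by omega
  rw [gM, if_pos ⟨by positivity, dvd_mul_right 2 _⟩, hs, qPochhammer]

theorem gM_of_neg {M : ℤ} (hM : M < 0) : gM M = 0 :=
  if_neg fun h => hM.not_ge h.1

theorem gM_of_odd {M : ℤ} (hM : Odd M) : gM M = 0 :=
  if_neg fun h => Int.not_even_iff_odd.mpr hM (even_iff_two_dvd.mpr h.2)

theorem gM_step (r : ℤ) : (1 - X ^ (r + 1)) * gM (2 * r + 2) = X ^ (2 * r + 2) * gM (2 * r) := by
  rcases r with s | _ | s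
  · have hs : (2 : ℤ) * (s : ℤ) + 2 = 2 * ((s + 1 : ℕ) : ℤ) := by push_cast; ring
    have hexp : (s + 1) * (s + 1 + 1) = (2 * s + 2) + s * (s + 1) := by ring
    have hpow₁ : (X : RatFunc ℚ) ^ ((s : ℤ) + 1) = X ^ (s + 1) := by norm_cast
    have hpow₂ : (X : RatFunc ℚ) ^ (2 * (s : ℤ) + 2) = X ^ (2 * s + 2) := by norm_cast
    rw [Int.ofNat_eq_natCast, hpow₁, hpow₂, hs, gM_two_mul, gM_two_mul, qPochhammer_succ, hexp,
      pow_add _ (2 * s + 2)]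
    field_simp [one_sub_X_pow_ne_zero s.succ_ne_zero, qPochhammer_ne_zero ℚ s]
  · simp [gM_of_neg]
  · rw [gM_of_neg (by omega), gM_of_neg (by omega), mul_zero, mul_zero]

/-- For every integer `M`, `(1 - q^M) g_M - q^M (1+q) g_{M-2} + q^{2M-1} g_{M-4} = 0`. -/
theorem gM_recurrence (M : ℤ) :
    (1 - (RatFunc.X : RatFunc ℚ) ^ M) * gM M -
      (RatFunc.X : RatFunc ℚ) ^ M * (1 + RatFunc.X) * gM (M - 2) +
      (RatFunc.X : RatFunc ℚ) ^ (2 * M - 1) * gM (M - 4) = 0 := by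
  rcases Int.even_or_odd M with hM | hM
  · obtain ⟨r, rfl⟩ : ∃ r, M = 2 * r + 4 := ⟨M / 2 - 2, by rcases hM with ⟨k, rfl⟩; omega⟩
    have hX : (X : RatFunc ℚ) ≠ 0 := X_ne_zero
    have h₁ := gM_step (r + 1)
    have h₀ := gM_step r
    rw [show 2 * (r + 1) + 2 = 2 * r + 4 by ring, show 2 * (r + 1) = 2 * r + 2 by ring] at h₁
    rw [show 2 * r + 4 - 2 = 2 * r + 2 by ring, show 2 * r + 4 - 4 = 2 * r by ring,
      show 2 * (2 * r + 4) - 1 = 4 * r + 7 by ring]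
    simp only [zpow_add₀ hX, zpow_mul', zpow_ofNat] at h₁ h₀ ⊢
    linear_combination (1 + X ^ r * X ^ 2) * h₁ - (X ^ r) ^ 2 * X ^ 5 * h₀
  · rw [gM_of_odd hM, gM_of_odd (hM.sub_even even_two),
      gM_of_odd (hM.sub_even (by decide : Even (4 : ℤ)))]
    ring
end

section
/- q-Chu–Vandermonde (specialized): for a nonnegative integer m, ₂φ₁(a, q^{−m}; 0; q, q) = ∑_{u=0}^m (a;q)_u (q^{−m};q)_u q^u / (q;q)_u = a^m. -/
open Finset

/-- The field `ℚ(a)(q)`: rational functions in `q` over rational functions in `a`. -/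
abbrev L : Type := RatFunc (RatFunc ℚ)

/-- The variable `q`. -/
noncomputable def qv : L := RatFunc.X

/-- The variable `a`. -/
noncomputable def av : L := RatFunc.C RatFunc.X

/-- `(c;q)_u = ∏_{0 ≤ j < u} (1 - c q^j)`. -/
noncomputable def poch (c : L) (u : ℕ) : L := ∏ j ∈ Finset.range u, (1 - c * qv ^ j)

lemma qv_ne_zero : qv ≠ 0 := RatFunc.X_ne_zero

lemma qv_pow_ne_one (k : ℕ) : qv ^ (k + 1) ≠ (1 : L) := by
  intro h
  have h2 : (algebraMap (Polynomial (RatFunc ℚ)) L) (Polynomial.X ^ (k + 1)) =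
      (algebraMap (Polynomial (RatFunc ℚ)) L) 1 := by
    simpa [qv, map_pow] using h
  have := RatFunc.algebraMap_injective (RatFunc ℚ) h2
  have hdeg := congrArg Polynomial.natDegree this
  simp [Polynomial.natDegree_X_pow] at hdeg

lemma one_sub_qv_pow_ne_zero (k : ℕ) : (1 : L) - qv * qv ^ k ≠ 0 := by
  have : qv * qv ^ k = qv ^ (k + 1) := by ring
  rw [this]
  exact fun h => qv_pow_ne_one k (sub_eq_zero.mp h).symm

lemma poch_qv_ne_zero (v : ℕ) : poch qv v ≠ 0 := by
  rw [poch, Finset.prod_ne_zero_iff]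
  intro j _
  exact one_sub_qv_pow_ne_zero j

lemma poch_zero (c : L) : poch c 0 = 1 := by simp [poch]

lemma poch_succ (c : L) (v : ℕ) : poch c (v + 1) = poch c v * (1 - c * qv ^ v) :=
  Finset.prod_range_succ _ _

lemma poch_div_q (x : L) (v : ℕ) :
    poch (x * qv⁻¹) (v + 1) = (1 - x * qv⁻¹) * poch x v := by
  rw [poch, Finset.prod_range_succ']
  have : ∀ j : ℕ, (1 : L) - x * qv⁻¹ * qv ^ (j + 1) = 1 - x * qv ^ j := by
    intro j
    field_simp [qv_ne_zero]
    ring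
  simp only [this, pow_zero, mul_one, poch, mul_comm]

/-- The telescoping certificate identity (for arbitrary `x` in place of `q^{-m}`). -/
lemma key_identity (x : L) (v : ℕ) :
    av * (poch av v * poch x v * qv ^ v / poch qv v)
      - poch av (v + 1) * poch (x * qv⁻¹) (v + 1) * qv ^ (v + 1) / poch qv (v + 1)
    = poch av v * poch x v / poch qv v
      - poch av (v + 1) * poch x (v + 1) / poch qv (v + 1) := by
  rw [poch_div_q, poch_succ av, poch_succ x, poch_succ qv]
  have hD := poch_qv_ne_zero v
  have hE := one_sub_qv_pow_ne_zero v
  have hq := qv_ne_zero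
  generalize he : 1 - qv * qv ^ v = e at hE ⊢
  field_simp
  subst he
  ring

/-- q-Chu–Vandermonde, specialized:
`₂φ₁(a, q^{-m}; 0; q, q) = ∑_{u=0}^m (a;q)_u (q^{-m};q)_u q^u / (q;q)_u = a^m`
(the series terminates at `u = m`, and `(0;q)_u = 1`). -/
theorem q_chu_vandermonde (m : ℕ) :
    ∑ u ∈ Finset.range (m + 1),
      poch av u * poch (qv ^ (-(m : ℤ))) u * qv ^ u / poch qv u = av ^ m := by
  induction m with
  | zero => simp [poch]
  | succ m ih =>
    set x : L := qv ^ (-(m : ℤ)) with hx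
    have hq := qv_ne_zero
    have hxq : qv ^ (-((m + 1 : ℕ) : ℤ)) = x * qv⁻¹ := by
      rw [hx, ← zpow_neg_one qv, ← zpow_add₀ hq]
      congr 1
      push_cast
      ring
    -- telescoping sum
    have htel : ∑ v ∈ Finset.range (m + 1),
        (av * (poch av v * poch x v * qv ^ v / poch qv v)
          - poch av (v + 1) * poch (x * qv⁻¹) (v + 1) * qv ^ (v + 1) / poch qv (v + 1))
        = 1 := by
      have := Finset.sum_range_sub' (fun v => poch av v * poch x v / poch qv v) (m + 1)
      calc ∑ v ∈ Finset.range (m + 1),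
          (av * (poch av v * poch x v * qv ^ v / poch qv v)
            - poch av (v + 1) * poch (x * qv⁻¹) (v + 1) * qv ^ (v + 1) / poch qv (v + 1))
          = ∑ v ∈ Finset.range (m + 1),
            (poch av v * poch x v / poch qv v
              - poch av (v + 1) * poch x (v + 1) / poch qv (v + 1)) := by
            exact Finset.sum_congr rfl fun v _ => key_identity x v
        _ = poch av 0 * poch x 0 / poch qv 0
            - poch av (m + 1) * poch x (m + 1) / poch qv (m + 1) := this
        _ = 1 := by
            have hxm : poch x (m + 1) = 0 := by
              rw [poch]
              apply Finset.prod_eq_zero (Finset.self_mem_range_succ m)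
              have : x * qv ^ m = 1 := by
                rw [hx, ← zpow_natCast qv m, ← zpow_add₀ hq]
                simp
              rw [this]; ring
            simp [poch_zero, hxm]
    rw [hxq]
    rw [Finset.sum_range_succ' _ (m + 1)]
    have hsum : ∑ v ∈ Finset.range (m + 1),
        poch av (v + 1) * poch (x * qv⁻¹) (v + 1) * qv ^ (v + 1) / poch qv (v + 1)
        = av ^ (m + 1) - 1 := by
      have h1 : ∑ v ∈ Finset.range (m + 1),
          av * (poch av v * poch x v * qv ^ v / poch qv v) = av ^ (m + 1) := by
        rw [← Finset.mul_sum, ih]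
        ring
      have := Finset.sum_sub_distrib (s := Finset.range (m + 1))
        (f := fun v => av * (poch av v * poch x v * qv ^ v / poch qv v))
        (g := fun v => poch av (v + 1) * poch (x * qv⁻¹) (v + 1) * qv ^ (v + 1) / poch qv (v + 1))
      rw [this, h1] at htel
      linear_combination -htel
    rw [hsum]
    simp [poch_zero]
end
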